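/- arXiv:1501.01580 — 2 statements merged into one kernel-verified Lean document; each statement's English description precedes it below -/
import Mathlib

section
/- Let 1 < p < ∞ and let f : ℝ^m × ℝ^{n×N} → [0,∞) be convex-quasiconvex and satisfy (H1)_p and (H2)_p. Then the recession function f^∞(b,ξ) := limsup_{t→∞} f(b,tξ)/t is convex-quasiconvex. -/
open MeasureTheory Filter Topology Bornology
open scoped RealInnerProductSpace ENNReal

noncomputable section

abbrev Vec (N : ℕ) : Type := EuclideanSpace ℝ (Fin N)
abbrev Mat (n N : ℕ) : Type := Vec N →L[ℝ] Vec n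

variable {N n m : ℕ}

/-- A function `g : ℝ^m × ℝ^{n×N} → ℝ` is convex-quasiconvex. -/
def IsConvexQuasiconvex (g : Vec m → Mat n N → ℝ) : Prop :=
  ∀ (b : Vec m) (ξ : Mat n N), ∃ D : Set (Vec N), IsOpen D ∧ IsBounded D ∧ 0 < volume D ∧
    ∀ η : Vec N → Vec m, MemLp η ⊤ (volume.restrict D) → (∫ x in D, η x) = 0 →
    ∀ φ : Vec N → Vec n, (∃ K, LipschitzWith K φ) → (∀ x ∉ D, φ x = 0) →
      g b ξ ≤ (volume D).toReal⁻¹ * ∫ x in D, g (b + η x) (ξ + fderiv ℝ φ x)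

/-- The convex-quasiconvex envelope of `f`. -/
def CQEnvelope (f : Vec m → Mat n N → ℝ) (b : Vec m) (ξ : Mat n N) : ℝ :=
  sSup {y | ∃ g : Vec m → Mat n N → ℝ,
    IsConvexQuasiconvex g ∧ (∀ b' ξ', g b' ξ' ≤ f b' ξ') ∧ y = g b ξ}

/-- The recession function `f^∞(b,ξ) = limsup_{t→∞} f(b,tξ)/t`. -/
def recessionFn (f : Vec m → Mat n N → ℝ) (b : Vec m) (ξ : Mat n N) : ℝ :=
  Filter.limsup (fun t : ℝ => f b (t • ξ) / t) Filter.atTop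

/-- Growth condition `(H1)_p`. -/
def H1p (p : ℝ) (f : Vec m → Mat n N → ℝ) : Prop :=
  ∃ C : ℝ, 0 < C ∧ ∀ (b : Vec m) (ξ : Mat n N),
    (1 / C) * (‖b‖ ^ p + ‖ξ‖) - C ≤ f b ξ ∧ f b ξ ≤ C * (1 + ‖b‖ ^ p + ‖ξ‖)

/-- Recession-rate condition `(H2)_p`. -/
def H2p (p : ℝ) (f : Vec m → Mat n N → ℝ) : Prop :=
  ∃ C' : ℝ, 0 < C' ∧ ∃ L : ℝ, 0 < L ∧ ∃ τ : ℝ, 0 < τ ∧ τ ≤ 1 ∧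
    ∀ (b : Vec m) (t : ℝ) (ξ : Mat n N), 0 < t → L < t * ‖ξ‖ →
      |f b (t • ξ) / t - recessionFn f b ξ| ≤ C' * ((‖b‖ ^ p + 1) / t + ‖ξ‖ ^ (1 - τ) / t ^ τ)

/-- Growth condition `(H1)_∞`. -/
def H1infty (f : Vec m → Mat n N → ℝ) : Prop :=
  ∀ M : ℝ, 0 < M → ∃ C : ℝ, 0 < C ∧ ∀ (b : Vec m) (ξ : Mat n N), ‖b‖ ≤ M →
    (1 / C) * ‖ξ‖ - C ≤ f b ξ ∧ f b ξ ≤ C * (1 + ‖ξ‖)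

/-- Recession-rate condition `(H2)_∞`. -/
def H2infty (f : Vec m → Mat n N → ℝ) : Prop :=
  ∀ M : ℝ, 0 < M → ∃ C' : ℝ, 0 < C' ∧ ∃ L : ℝ, 0 < L ∧ ∃ τ : ℝ, 0 < τ ∧ τ ≤ 1 ∧
    ∀ (b : Vec m) (t : ℝ) (ξ : Mat n N), ‖b‖ ≤ M → 0 < t → L < t * ‖ξ‖ →
      |f b (t • ξ) / t - recessionFn f b ξ| ≤ C' * (‖ξ‖ ^ (1 - τ) / t ^ τ)

/-- Strong `L^1(Ω)` convergence of a sequence. -/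
def TendstoL1 (Ω : Set (Vec N)) (uh : ℕ → Vec N → Vec n) (u : Vec N → Vec n) : Prop :=
  Tendsto (fun h => ∫ x in Ω, ‖uh h x - u x‖) atTop (𝓝 0)

/-- Weak convergence in `L^p(Ω)`, expressed by testing against `L^q(Ω)`,
`q` the conjugate exponent (`q = 1` gives weak-* convergence in `L^∞`). -/
def TendstoWeakLp (Ω : Set (Vec N)) (q : ℝ≥0∞) (vh : ℕ → Vec N → Vec m)
    (v : Vec N → Vec m) : Prop :=
  ∀ w : Vec N → Vec m, MemLp w q (volume.restrict Ω) →
    Tendsto (fun h => ∫ x in Ω, ⟪vh h x, w x⟫) atTop (𝓝 (∫ x in Ω, ⟪v x, w x⟫))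

/-- `G` is the distributional (weak) gradient of `u` on `Ω`. -/
def HasWeakGradOn (u : Vec N → Vec n) (G : Vec N → Mat n N) (Ω : Set (Vec N)) : Prop :=
  ∀ φ : Vec N → ℝ, ContDiff ℝ (⊤ : ℕ∞) φ → HasCompactSupport φ → tsupport φ ⊆ Ω →
    (∫ x in Ω, φ x • G x) = - ∫ x in Ω, (fderiv ℝ φ x).smulRight (u x)

/-- `u ∈ W^{1,1}(Ω;ℝ^n)` with weak gradient `G`. -/
def MemW11 (Ω : Set (Vec N)) (u : Vec N → Vec n) (G : Vec N → Mat n N) : Prop :=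
  IntegrableOn u Ω ∧ IntegrableOn G Ω ∧ HasWeakGradOn u G Ω

/-- The relaxed functional `J̄(u,v;Ω)`: infimum of `liminf ∫_Ω f(v_h, ∇u_h)` over
sequences `u_h ∈ W^{1,1}`, `v_h ∈ L^p`, with `u_h → u` in `L^1` and `v_h ⇀ v`
weakly in `L^p` (weakly-* if `p = ∞`, i.e. `q = 1`). -/
def Jrelax (f : Vec m → Mat n N → ℝ) (p q : ℝ≥0∞) (Ω : Set (Vec N))
    (u : Vec N → Vec n) (v : Vec N → Vec m) : ℝ :=
  sInf {c | ∃ (uh : ℕ → Vec N → Vec n) (Gh : ℕ → Vec N → Mat n N) (vh : ℕ → Vec N → Vec m),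
    (∀ h, MemW11 Ω (uh h) (Gh h)) ∧ (∀ h, MemLp (vh h) p (volume.restrict Ω)) ∧
    TendstoL1 Ω uh u ∧ TendstoWeakLp Ω q vh v ∧
    c = liminf (fun h => ∫ x in Ω, f (vh h x) (Gh h x)) atTop}

/-- `u ∈ BV(Ω;ℝ^n)` with Lebesgue decomposition
`Du = gradU ℒ^N + σ μs`, where `μs = |D^s u|` is a finite measure singular with
respect to Lebesgue measure and `σ = dD^su/d|D^su|` has unit norm `μs`-a.e. -/
def IsBVRepresentation (Ω : Set (Vec N)) (u : Vec N → Vec n) (gradU : Vec N → Mat n N)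
    (μs : Measure (Vec N)) (σ : Vec N → Mat n N) : Prop :=
  IntegrableOn u Ω ∧ IntegrableOn gradU Ω ∧ μs Set.univ < ⊤ ∧ μs Ωᶜ = 0 ∧
    μs.MutuallySingular volume ∧ (∀ᵐ x ∂μs, ‖σ x‖ = 1) ∧ Integrable σ μs ∧
    ∀ φ : Vec N → ℝ, ContDiff ℝ (⊤ : ℕ∞) φ → HasCompactSupport φ → tsupport φ ⊆ Ω →
      ((∫ x in Ω, φ x • gradU x) + ∫ x in Ω, φ x • σ x ∂μs)
        = - ∫ x in Ω, (fderiv ℝ φ x).smulRight (u x)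



section AuxRecession

variable {N n m : ℕ}

private lemma fderiv_csmul (c : ℝ) (hc : c ≠ 0) (φ : Vec N → Vec n) (x : Vec N) :
    fderiv ℝ (fun y => c • φ y) x = c • fderiv ℝ φ x := by
  by_cases hd : DifferentiableAt ℝ φ x
  · exact fderiv_const_smul hd c
  · rw [fderiv_zero_of_not_differentiableAt hd, smul_zero (M := ℝ) (A := Mat n N),
      fderiv_zero_of_not_differentiableAt]
    intro hd'
    exact hd (by simpa [smul_smul, inv_mul_cancel₀ hc, Pi.smul_def] using hd'.const_smul c⁻¹)

private lemma fderiv_scaled (a : Vec N) {ε : ℝ} (hε : 0 < ε) (φ : Vec N → Vec n) (y : Vec N) :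
    fderiv ℝ (fun x => ε • φ (ε⁻¹ • (x - a))) (a + ε • y) = fderiv ℝ φ y := by
  have hA : ∀ x : Vec N, ε⁻¹ • ((a + ε • x) - a) = x := fun x => by
    rw [add_sub_cancel_left, smul_smul, inv_mul_cancel₀ hε.ne', one_smul]
  by_cases hd : DifferentiableAt ℝ φ y
  · have h1 : HasFDerivAt (fun x : Vec N => ε⁻¹ • (x - a))
        (ε⁻¹ • ContinuousLinearMap.id ℝ (Vec N)) (a + ε • y) :=
      ((hasFDerivAt_id _).sub_const a).const_smul ε⁻¹
    have h2 : HasFDerivAt φ (fderiv ℝ φ y) (ε⁻¹ • ((a + ε • y) - a)) := by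
      rw [hA]; exact hd.hasFDerivAt
    have h3 := (h2.comp (a + ε • y) h1).const_smul ε
    have h4 : ε • ((fderiv ℝ φ y).comp (ε⁻¹ • ContinuousLinearMap.id ℝ (Vec N)))
        = fderiv ℝ φ y := by
      rw [ContinuousLinearMap.comp_smul, ContinuousLinearMap.comp_id, smul_smul,
        mul_inv_cancel₀ hε.ne', one_smul]
    rw [← h4]
    exact h3.fderiv
  · rw [fderiv_zero_of_not_differentiableAt hd, fderiv_zero_of_not_differentiableAt]
    intro hd'
    apply hd
    have hcomp : DifferentiableAt ℝ (fun z : Vec N => a + ε • z) y :=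
      (differentiableAt_const a).add (differentiableAt_id.const_smul ε)
    have h5 := (hd'.comp y hcomp).const_smul ε⁻¹
    simp only [Function.comp_def, Pi.smul_def] at h5
    have h6 : (fun z : Vec N => ε⁻¹ • ε • φ (ε⁻¹ • ((a + ε • z) - a))) = φ := by
      funext z
      rw [hA, smul_smul, inv_mul_cancel₀ hε.ne', one_smul]
    rwa [h6] at h5

private lemma fderiv_scaled' (a : Vec N) {ε : ℝ} (hε : 0 < ε) (φ : Vec N → Vec n) (x : Vec N) :
    fderiv ℝ (fun z => ε • φ (ε⁻¹ • (z - a))) x = fderiv ℝ φ (ε⁻¹ • (x - a)) := by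
  have hx : a + ε • (ε⁻¹ • (x - a)) = x := by
    rw [smul_smul, mul_inv_cancel₀ hε.ne', one_smul]; abel
  conv_lhs => rw [← hx]
  exact fderiv_scaled a hε φ _

private lemma fderiv_out {φ : Vec N → Vec n} (hφ0 : ∀ x ∉ Metric.ball (0 : Vec N) 1, φ x = 0)
    {y : Vec N} (hy : y ∉ Metric.closedBall (0 : Vec N) 1) : fderiv ℝ φ y = 0 := by
  have hmem : (Metric.closedBall (0 : Vec N) 1)ᶜ ∈ 𝓝 y :=
    Metric.isClosed_closedBall.isOpen_compl.mem_nhds hy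
  have heq : φ =ᶠ[𝓝 y] fun _ => (0 : Vec n) := by
    filter_upwards [hmem] with z hz
    exact hφ0 z fun h => hz (Metric.ball_subset_closedBall h)
  rw [heq.fderiv_eq]
  exact fderiv_const_apply 0

private lemma lipschitz_const_smul {c : ℝ} {φ : Vec N → Vec n} {K : NNReal}
    (h : LipschitzWith K φ) : ∃ K', LipschitzWith K' (fun y => c • φ y) := by
  refine ⟨⟨|c|, abs_nonneg c⟩ * K, LipschitzWith.of_dist_le_mul fun x y => ?_⟩
  rw [dist_eq_norm, dist_eq_norm, ← smul_sub, norm_smul, Real.norm_eq_abs]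
  have h2 := h.dist_le_mul x y
  rw [dist_eq_norm, dist_eq_norm] at h2
  calc |c| * ‖φ x - φ y‖ ≤ |c| * ((K : ℝ) * ‖x - y‖) :=
        mul_le_mul_of_nonneg_left h2 (abs_nonneg c)
    _ = ((⟨|c|, abs_nonneg c⟩ * K : NNReal) : ℝ) * ‖x - y‖ := by
        show |c| * ((K : ℝ) * ‖x - y‖) = (|c| * (K : ℝ)) * ‖x - y‖; ring

private lemma recession_zero (f : Vec m → Mat n N → ℝ) (b : Vec m) :
    recessionFn f b 0 = 0 := by
  have h0 : Tendsto (fun t : ℝ => f b 0 / t) atTop (𝓝 (0:ℝ)) :=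
    Tendsto.div_atTop (tendsto_const_nhds (x := f b 0)) tendsto_id
  have heq : (fun t : ℝ => f b (t • (0 : Mat n N)) / t) = fun t : ℝ => f b 0 / t := by
    funext t
    exact congrArg (fun ζ => f b ζ / t) (smul_zero (M := ℝ) (A := Mat n N) t)
  have h : Tendsto (fun t : ℝ => f b (t • (0 : Mat n N)) / t) atTop (𝓝 (0:ℝ)) := by
    rw [heq]; exact h0
  exact h.limsup_eq

private lemma recession_nonneg {p C : ℝ} (hC : 0 < C) {f : Vec m → Mat n N → ℝ}
    (hf0 : ∀ b ξ, 0 ≤ f b ξ)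
    (hub : ∀ (b : Vec m) (ξ : Mat n N), f b ξ ≤ C * (1 + ‖b‖ ^ p + ‖ξ‖))
    (b : Vec m) (ξ : Mat n N) : 0 ≤ recessionFn f b ξ := by
  have hbp : (0:ℝ) ≤ ‖b‖ ^ p := Real.rpow_nonneg (norm_nonneg b) p
  have hb : IsBoundedUnder (· ≤ ·) atTop (fun t : ℝ => f b (t • ξ) / t) := by
    refine ⟨C * (1 + ‖b‖ ^ p) + C * ‖ξ‖, eventually_map.mpr ?_⟩
    filter_upwards [eventually_ge_atTop (1 : ℝ)] with t ht
    have ht0 : (0:ℝ) < t := lt_of_lt_of_le one_pos ht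
    have hn : ‖t • ξ‖ = t * ‖ξ‖ := by
      rw [norm_smul t ξ, Real.norm_eq_abs, abs_of_pos ht0]
    have h1 : f b (t • ξ) / t ≤ C * (1 + ‖b‖ ^ p + t * ‖ξ‖) / t := by
      have hh := hub b (t • ξ)
      rw [hn] at hh
      gcongr
    have h2 : C * (1 + ‖b‖ ^ p + t * ‖ξ‖) / t = C * (1 + ‖b‖ ^ p) / t + C * ‖ξ‖ := by
      field_simp
    have h3 : C * (1 + ‖b‖ ^ p) / t ≤ C * (1 + ‖b‖ ^ p) :=
      div_le_self (by positivity) ht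
    calc f b (t • ξ) / t ≤ C * (1 + ‖b‖ ^ p) / t + C * ‖ξ‖ := by rw [← h2]; exact h1
      _ ≤ C * (1 + ‖b‖ ^ p) + C * ‖ξ‖ := by linarith
  refine le_limsup_of_frequently_le ?_ hb
  exact ((eventually_gt_atTop (0:ℝ)).mono fun t ht => div_nonneg (hf0 _ _) ht.le).frequently

private lemma recession_tendsto {p C' L τ : ℝ} (hτ : 0 < τ) {f : Vec m → Mat n N → ℝ}
    (h2 : ∀ (b : Vec m) (t : ℝ) (ξ : Mat n N), 0 < t → L < t * ‖ξ‖ →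
      |f b (t • ξ) / t - recessionFn f b ξ| ≤ C' * ((‖b‖ ^ p + 1) / t + ‖ξ‖ ^ (1 - τ) / t ^ τ))
    (b : Vec m) {ζ : Mat n N} (hζ : ζ ≠ 0) :
    Tendsto (fun k : ℕ => f b ((k : ℝ) • ζ) / (k : ℝ)) atTop (𝓝 (recessionFn f b ζ)) := by
  have hnz : (0:ℝ) < ‖ζ‖ := norm_pos_iff.mpr hζ
  rw [tendsto_iff_dist_tendsto_zero]
  simp only [Real.dist_eq]
  have hbound : ∀ᶠ k : ℕ in atTop,
      |f b ((k:ℝ) • ζ) / (k:ℝ) - recessionFn f b ζ|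
        ≤ C' * ((‖b‖ ^ p + 1) / (k:ℝ) + ‖ζ‖ ^ (1 - τ) / (k:ℝ) ^ τ) := by
    obtain ⟨K, hK⟩ := exists_nat_gt (L / ‖ζ‖)
    filter_upwards [eventually_ge_atTop (K + 1)] with k hk
    have hk0 : (0:ℝ) < (k:ℝ) := by
      have h1 : 0 < k := lt_of_lt_of_le (Nat.succ_pos K) hk
      exact_mod_cast h1
    have hKk : (K:ℝ) ≤ (k:ℝ) := by
      exact_mod_cast le_trans (Nat.le_succ K) hk
    have hL' : L < (k:ℝ) * ‖ζ‖ := (div_lt_iff₀ hnz).mp (lt_of_lt_of_le hK hKk)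
    exact h2 b (k:ℝ) ζ hk0 hL'
  have htend : Tendsto (fun k : ℕ =>
      C' * ((‖b‖ ^ p + 1) / (k:ℝ) + ‖ζ‖ ^ (1 - τ) / (k:ℝ) ^ τ)) atTop (𝓝 0) := by
    have h1 : Tendsto (fun k : ℕ => (‖b‖ ^ p + 1) / (k:ℝ)) atTop (𝓝 0) :=
      tendsto_const_div_atTop_nhds_zero_nat _
    have h2' : Tendsto (fun k : ℕ => ‖ζ‖ ^ (1 - τ) / (k:ℝ) ^ τ) atTop (𝓝 0) :=
      Tendsto.div_atTop tendsto_const_nhds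
        ((tendsto_rpow_atTop hτ).comp tendsto_natCast_atTop_atTop)
    have := (h1.add h2').const_mul C'
    simpa using this
  exact squeeze_zero' (Eventually.of_forall fun k => abs_nonneg _) hbound htend

private lemma cov_integral {F : Type*} [NormedAddCommGroup F] [NormedSpace ℝ F]
    (a : Vec N) {ε : ℝ} (hε : 0 < ε) (g : Vec N → F) :
    ∫ x in Metric.ball a ε, g (ε⁻¹ • (x - a)) =
      (ε ^ N) • ∫ y in Metric.ball (0 : Vec N) 1, g y := by
  have hA : ∀ x : Vec N, ε⁻¹ • ((a + ε • x) - a) = x := fun x => by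
    rw [add_sub_cancel_left, smul_smul, inv_mul_cancel₀ hε.ne', one_smul]
  have hmem : ∀ y : Vec N, (a + ε • y ∈ Metric.ball a ε) ↔ y ∈ Metric.ball (0 : Vec N) 1 := by
    intro y
    rw [Metric.mem_ball, Metric.mem_ball, dist_eq_norm, dist_eq_norm, add_sub_cancel_left,
      sub_zero, norm_smul, Real.norm_eq_abs, abs_of_pos hε]
    exact mul_lt_iff_lt_one_right hε
  set H : Vec N → F := (Metric.ball a ε).indicator (fun x => g (ε⁻¹ • (x - a))) with hH
  have key : ∀ y : Vec N, H (a + ε • y) = (Metric.ball (0 : Vec N) 1).indicator g y := by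
    intro y
    by_cases hy : y ∈ Metric.ball (0 : Vec N) 1
    · rw [hH, Set.indicator_of_mem ((hmem y).mpr hy), Set.indicator_of_mem hy, hA]
    · rw [hH, Set.indicator_of_notMem (fun h => hy ((hmem y).mp h)), Set.indicator_of_notMem hy]
  have e1 : ∫ x, H x = ∫ x, H (a + x) := (integral_add_left_eq_self H a).symm
  have e2 : ∫ y, H (a + ε • y) = |((ε ^ Module.finrank ℝ (Vec N)))⁻¹| • ∫ x, H (a + x) :=
    MeasureTheory.Measure.integral_comp_smul volume (fun x => H (a + x)) ε
  have habs : |((ε ^ Module.finrank ℝ (Vec N)))⁻¹| = (ε ^ N)⁻¹ := by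
    rw [finrank_euclideanSpace_fin, abs_of_pos (inv_pos.mpr (pow_pos hε N))]
  have e3 : ∫ x, H (a + x) = (ε ^ N) • ∫ y, H (a + ε • y) := by
    rw [e2, habs, smul_smul, mul_inv_cancel₀ (pow_pos hε N).ne', one_smul]
  have lhs : ∫ x in Metric.ball a ε, g (ε⁻¹ • (x - a)) = ∫ x, H x :=
    (integral_indicator measurableSet_ball).symm
  have rhs : ∫ y, H (a + ε • y) = ∫ y in Metric.ball (0 : Vec N) 1, g y := by
    simp_rw [key]
    exact integral_indicator measurableSet_ball
  rw [lhs, e1, e3, rhs]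

private lemma cov_integrable {F : Type*} [NormedAddCommGroup F]
    (a : Vec N) {ε : ℝ} (hε : 0 < ε) (g : Vec N → F) :
    IntegrableOn (fun x => g (ε⁻¹ • (x - a))) (Metric.ball a ε) volume ↔
      IntegrableOn g (Metric.ball (0 : Vec N) 1) volume := by
  have hA : ∀ x : Vec N, ε⁻¹ • ((a + ε • x) - a) = x := fun x => by
    rw [add_sub_cancel_left, smul_smul, inv_mul_cancel₀ hε.ne', one_smul]
  have hmem : ∀ y : Vec N, (a + ε • y ∈ Metric.ball a ε) ↔ y ∈ Metric.ball (0 : Vec N) 1 := by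
    intro y
    rw [Metric.mem_ball, Metric.mem_ball, dist_eq_norm, dist_eq_norm, add_sub_cancel_left,
      sub_zero, norm_smul, Real.norm_eq_abs, abs_of_pos hε]
    exact mul_lt_iff_lt_one_right hε
  set H : Vec N → F := (Metric.ball a ε).indicator (fun x => g (ε⁻¹ • (x - a))) with hH
  have key : ∀ y : Vec N, H (a + ε • y) = (Metric.ball (0 : Vec N) 1).indicator g y := by
    intro y
    by_cases hy : y ∈ Metric.ball (0 : Vec N) 1
    · rw [hH, Set.indicator_of_mem ((hmem y).mpr hy), Set.indicator_of_mem hy, hA]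
    · rw [hH, Set.indicator_of_notMem (fun h => hy ((hmem y).mp h)), Set.indicator_of_notMem hy]
  rw [← integrable_indicator_iff (measurableSet_ball (x := a) (ε := ε)),
    ← integrable_indicator_iff (measurableSet_ball (x := (0 : Vec N)) (ε := 1)), ← hH]
  have step1 : Integrable H volume ↔ Integrable (fun x => H (a + x)) volume := by
    constructor
    · exact fun h => h.comp_add_left a
    · intro h
      have := h.comp_add_left (-a)
      simpa [add_neg_cancel_left] using this
  have step2 : Integrable (fun x => H (a + x)) volume ↔
      Integrable (fun y => H (a + ε • y)) volume :=
    (MeasureTheory.integrable_comp_smul_iff volume (fun x => H (a + x)) hε.ne').symm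
  rw [step1, step2]
  constructor
  · intro h; exact h.congr (Eventually.of_forall key)
  · intro h; exact h.congr (Eventually.of_forall fun y => (key y).symm)

private lemma arith_key {t d e β I : ℝ} (hd : 0 < d) (he : 0 < e) (hβ : 0 < β)
    (h : t ≤ d⁻¹ * (e * I + (d - e * β) * t)) : t ≤ β⁻¹ * I := by
  have h2 : t * d ≤ e * I + (d - e * β) * t := by
    have h' : t ≤ (e * I + (d - e * β) * t) / d := by rw [div_eq_inv_mul]; exact h
    exact (le_div_iff₀ hd).mp h'
  have h3 : e * (β * t) ≤ e * I := by nlinarith [h2]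
  have h4 : β * t ≤ I := le_of_mul_le_mul_left h3 he
  rw [inv_mul_eq_div, le_div_iff₀ hβ]
  linarith

set_option maxHeartbeats 1000000 in
private lemma key_ball (f : Vec m → Mat n N → ℝ) (hH0 : IsConvexQuasiconvex f)
    (b₀ : Vec m) (ξ₀ : Mat n N) (η : Vec N → Vec m)
    (hη : MemLp η ⊤ (volume.restrict (Metric.ball (0 : Vec N) 1)))
    (hη0 : (∫ x in Metric.ball (0 : Vec N) 1, η x) = 0)
    (φ : Vec N → Vec n) (hφl : ∃ K, LipschitzWith K φ)
    (hφ0 : ∀ x ∉ Metric.ball (0 : Vec N) 1, φ x = 0) :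
    (f b₀ ξ₀ ≤ (volume (Metric.ball (0 : Vec N) 1)).toReal⁻¹ *
        ∫ x in Metric.ball (0 : Vec N) 1, f (b₀ + η x) (ξ₀ + fderiv ℝ φ x)) ∧
      (¬ IntegrableOn (fun x => f (b₀ + η x) (ξ₀ + fderiv ℝ φ x))
          (Metric.ball (0 : Vec N) 1) volume → f b₀ ξ₀ ≤ 0) := by
  classical
  obtain ⟨D, hDopen, hDbd, hDpos, hD⟩ := hH0 b₀ ξ₀
  have hDne : D.Nonempty := by
    rcases Set.eq_empty_or_nonempty D with h | h
    · rw [h, measure_empty] at hDpos; exact absurd hDpos (lt_irrefl 0)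
    · exact h
  obtain ⟨a, ha⟩ := hDne
  obtain ⟨ε, hε, hball⟩ := Metric.isOpen_iff.mp hDopen a ha
  obtain ⟨K, hK⟩ := hφl
  -- a pointwise-bounded strongly measurable representative of η
  have hbd : ∃ M : ℝ, 0 ≤ M ∧
      ∀ᵐ x ∂(volume.restrict (Metric.ball (0 : Vec N) 1)), ‖η x‖ ≤ M := by
    refine ⟨(eLpNormEssSup η (volume.restrict (Metric.ball (0 : Vec N) 1))).toReal,
      ENNReal.toReal_nonneg, ?_⟩
    have hlt : eLpNormEssSup η (volume.restrict (Metric.ball (0 : Vec N) 1)) < ⊤ := by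
      have h2 := hη.2
      rwa [eLpNorm_exponent_top] at h2
    filter_upwards [ae_le_eLpNormEssSup
      (f := η) (μ := volume.restrict (Metric.ball (0 : Vec N) 1))] with x hx
    have h3 : ((‖η x‖₊ : ℝ≥0∞)).toReal ≤
        (eLpNormEssSup η (volume.restrict (Metric.ball (0 : Vec N) 1))).toReal :=
      ENNReal.toReal_mono hlt.ne hx
    simpa using h3
  obtain ⟨M, hM0, hMb⟩ := hbd
  have hg0sm : StronglyMeasurable (hη.1.mk η) := hη.1.stronglyMeasurable_mk
  have hg0ae : η =ᵐ[volume.restrict (Metric.ball (0 : Vec N) 1)] hη.1.mk η := hη.1.ae_eq_mk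
  set g : Vec N → Vec m := fun x => if ‖hη.1.mk η x‖ ≤ M then hη.1.mk η x else 0 with hgdef
  have hgsm : StronglyMeasurable g := by
    refine StronglyMeasurable.ite ?_ hg0sm stronglyMeasurable_const
    exact measurableSet_le hg0sm.measurable.norm measurable_const
  have hgbd : ∀ x, ‖g x‖ ≤ M := fun x => by
    rw [hgdef]
    by_cases h : ‖hη.1.mk η x‖ ≤ M
    · simpa [h] using h
    · simpa [h] using hM0
  have hgae : η =ᵐ[volume.restrict (Metric.ball (0 : Vec N) 1)] g := by
    filter_upwards [hg0ae, hMb] with x h1 h2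
    have h3 : ‖hη.1.mk η x‖ ≤ M := by rw [← h1]; exact h2
    rw [hgdef]
    simpa [h3] using h1
  -- the transported test pair
  set η' : Vec N → Vec m := (Metric.ball a ε).indicator (fun x => g (ε⁻¹ • (x - a))) with hη'def
  set ψ : Vec N → Vec n := fun x => ε • φ (ε⁻¹ • (x - a)) with hψdef
  have hAmeas : Measurable fun x : Vec N => ε⁻¹ • (x - a) :=
    (((continuous_id.sub continuous_const).const_smul ε⁻¹)).measurable
  have hη'mem : MemLp η' ⊤ (volume.restrict D) := by
    refine memLp_top_of_bound ?_ M (Eventually.of_forall fun x => ?_)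
    · exact ((hgsm.comp_measurable hAmeas).indicator measurableSet_ball).aestronglyMeasurable
    · rw [hη'def]
      by_cases h : x ∈ Metric.ball a ε
      · rw [Set.indicator_of_mem h]; exact hgbd _
      · rw [Set.indicator_of_notMem h]; simpa using hM0
  have hη'int : (∫ x in D, η' x) = 0 := by
    rw [hη'def, setIntegral_indicator measurableSet_ball,
      Set.inter_eq_self_of_subset_right hball, cov_integral a hε g]
    have : ∫ y in Metric.ball (0 : Vec N) 1, g y = ∫ y in Metric.ball (0 : Vec N) 1, η y :=
      integral_congr_ae hgae.symm
    rw [this, hη0, smul_zero]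
  have hψlip : ∃ K', LipschitzWith K' ψ := by
    have hALip : LipschitzWith ⟨ε⁻¹, (inv_pos.mpr hε).le⟩ (fun x : Vec N => ε⁻¹ • (x - a)) := by
      refine LipschitzWith.of_dist_le_mul fun x y => ?_
      rw [dist_eq_norm, dist_eq_norm, ← smul_sub, sub_sub_sub_cancel_right, norm_smul,
        Real.norm_eq_abs, abs_of_pos (inv_pos.mpr hε)]
      exact le_rfl
    have hcomp := hK.comp hALip
    obtain ⟨K', hK'⟩ := lipschitz_const_smul (c := ε) hcomp
    refine ⟨K', ?_⟩
    rw [hψdef]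
    exact hK'
  have hmemball : ∀ x : Vec N, ε⁻¹ • (x - a) ∈ Metric.ball (0 : Vec N) 1 → x ∈ Metric.ball a ε := by
    intro x hx
    rw [Metric.mem_ball, dist_zero_right] at hx
    rw [Metric.mem_ball, dist_eq_norm]
    have hxa : ‖x - a‖ = ε * ‖ε⁻¹ • (x - a)‖ := by
      rw [norm_smul, Real.norm_eq_abs, abs_of_pos (inv_pos.mpr hε)]
      field_simp
    rw [hxa]
    calc ε * ‖ε⁻¹ • (x - a)‖ < ε * 1 := mul_lt_mul_of_pos_left hx hε
      _ = ε := mul_one ε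
  have hψ0 : ∀ x ∉ D, ψ x = 0 := by
    intro x hx
    have h1 : ε⁻¹ • (x - a) ∉ Metric.ball (0 : Vec N) 1 := fun h => hx (hball (hmemball x h))
    rw [hψdef]
    simp only []
    rw [hφ0 _ h1, smul_zero]
  have key := hD η' hη'mem hη'int ψ hψlip hψ0
  -- identify the integrand a.e. with an explicit function W
  set W : Vec N → ℝ := fun x =>
    if x ∈ Metric.ball a ε then
      f (b₀ + g (ε⁻¹ • (x - a))) (ξ₀ + fderiv ℝ φ (ε⁻¹ • (x - a)))
    else f b₀ ξ₀ with hWdef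
  have hptw : ∀ x ∉ Metric.sphere a ε, f (b₀ + η' x) (ξ₀ + fderiv ℝ ψ x) = W x := by
    intro x hx
    have hfd : fderiv ℝ ψ x = fderiv ℝ φ (ε⁻¹ • (x - a)) := by
      rw [hψdef]; exact fderiv_scaled' a hε φ x
    by_cases hmem : x ∈ Metric.ball a ε
    · rw [hWdef]
      simp only [if_pos hmem]
      rw [hη'def, Set.indicator_of_mem hmem, hfd]
    · have hout : x ∉ Metric.closedBall a ε := by
        intro hcb
        rcases lt_or_eq_of_le (Metric.mem_closedBall.mp hcb) with h | h
        · exact hmem (Metric.mem_ball.mpr h)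
        · exact hx (Metric.mem_sphere.mpr h)
      have hAout : ε⁻¹ • (x - a) ∉ Metric.closedBall (0 : Vec N) 1 := by
        intro hc
        apply hout
        rw [Metric.mem_closedBall, dist_zero_right] at hc
        rw [Metric.mem_closedBall, dist_eq_norm]
        have hxa : ‖x - a‖ = ε * ‖ε⁻¹ • (x - a)‖ := by
          rw [norm_smul, Real.norm_eq_abs, abs_of_pos (inv_pos.mpr hε)]
          field_simp
        rw [hxa]
        calc ε * ‖ε⁻¹ • (x - a)‖ ≤ ε * 1 := mul_le_mul_of_nonneg_left hc hε.le
          _ = ε := mul_one ε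
      have hfd0 : fderiv ℝ φ (ε⁻¹ • (x - a)) = 0 := fderiv_out hφ0 hAout
      rw [hWdef]
      simp only [if_neg hmem]
      rw [hη'def, Set.indicator_of_notMem hmem, hfd, hfd0, add_zero, add_zero]
  have haew : (fun x => f (b₀ + η' x) (ξ₀ + fderiv ℝ ψ x)) =ᵐ[volume.restrict D] W := by
    have hs : ∀ᵐ x ∂(volume.restrict D), x ∉ Metric.sphere a ε := by
      apply ae_restrict_of_ae
      have h0 : volume (Metric.sphere a ε) = 0 :=
        Measure.addHaar_sphere_of_ne_zero volume a hε.ne'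
      exact compl_mem_ae_iff.mpr h0
    filter_upwards [hs] with x hx using hptw x hx
  rw [integral_congr_ae haew] at key
  -- measure bookkeeping
  have hDfin : volume D < ⊤ := hDbd.measure_lt_top
  have hdpos : 0 < (volume D).toReal := ENNReal.toReal_pos hDpos.ne' hDfin.ne
  have hβpos : 0 < (volume (Metric.ball (0 : Vec N) 1)).toReal :=
    ENNReal.toReal_pos (Metric.measure_ball_pos volume 0 one_pos).ne' measure_ball_lt_top.ne
  have hballvol : (volume (Metric.ball a ε)).toReal =
      ε ^ N * (volume (Metric.ball (0 : Vec N) 1)).toReal := by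
    rw [Measure.addHaar_ball_of_pos volume a hε, finrank_euclideanSpace_fin,
      ENNReal.toReal_mul, ENNReal.toReal_ofReal (pow_nonneg hε.le N)]
  have hce : ε ^ N * (volume (Metric.ball (0 : Vec N) 1)).toReal ≤ (volume D).toReal := by
    rw [← hballvol]
    exact ENNReal.toReal_mono hDfin.ne (measure_mono hball)
  have hεN : (0:ℝ) < ε ^ N := pow_pos hε N
  -- relate the two integrands
  have hGGg : (fun x => f (b₀ + g x) (ξ₀ + fderiv ℝ φ x))
      =ᵐ[volume.restrict (Metric.ball (0 : Vec N) 1)]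
      (fun x => f (b₀ + η x) (ξ₀ + fderiv ℝ φ x)) := by
    filter_upwards [hgae] with x hx
    rw [← hx]
  have hcovInt := cov_integrable a hε (fun x => f (b₀ + g x) (ξ₀ + fderiv ℝ φ x))
  have hcov := cov_integral a hε (fun x => f (b₀ + g x) (ξ₀ + fderiv ℝ φ x))
  have hWball : Set.EqOn (fun x => f (b₀ + g (ε⁻¹ • (x - a))) (ξ₀ + fderiv ℝ φ (ε⁻¹ • (x - a))))
      W (Metric.ball a ε) := by
    intro x hx
    rw [hWdef]
    simp only [if_pos hx]
  have hWrest : Set.EqOn (fun _ => f b₀ ξ₀) W (D \ Metric.ball a ε) := by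
    intro x hx
    rw [hWdef]
    simp only [if_neg hx.2]
  by_cases hInt : IntegrableOn (fun x => f (b₀ + η x) (ξ₀ + fderiv ℝ φ x))
      (Metric.ball (0 : Vec N) 1) volume
  · have hIntGg : IntegrableOn (fun x => f (b₀ + g x) (ξ₀ + fderiv ℝ φ x))
        (Metric.ball (0 : Vec N) 1) volume := hInt.congr hGGg.symm
    have hIntA : IntegrableOn
        (fun x => f (b₀ + g (ε⁻¹ • (x - a))) (ξ₀ + fderiv ℝ φ (ε⁻¹ • (x - a))))
        (Metric.ball a ε) volume := hcovInt.mpr hIntGg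
    have hIntW1 : IntegrableOn W (Metric.ball a ε) volume :=
      hIntA.congr_fun hWball measurableSet_ball
    have hmeasd : MeasurableSet (D \ Metric.ball a ε) :=
      hDopen.measurableSet.diff measurableSet_ball
    have hIntW2 : IntegrableOn W (D \ Metric.ball a ε) volume := by
      have hc : IntegrableOn (fun _ => f b₀ ξ₀) (D \ Metric.ball a ε) volume :=
        integrableOn_const (lt_of_le_of_lt (measure_mono Set.diff_subset) hDfin).ne
      exact hc.congr_fun hWrest hmeasd
    have hU : D = Metric.ball a ε ∪ (D \ Metric.ball a ε) := (Set.union_diff_cancel hball).symm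
    have hsplit : ∫ x in D, W x =
        (∫ x in Metric.ball a ε, W x) + ∫ x in D \ Metric.ball a ε, W x := by
      conv_lhs => rw [hU]
      exact setIntegral_union Set.disjoint_sdiff_right hmeasd hIntW1 hIntW2
    have hI1 : ∫ x in Metric.ball a ε, W x =
        ε ^ N * ∫ x in Metric.ball (0 : Vec N) 1, f (b₀ + η x) (ξ₀ + fderiv ℝ φ x) := by
      rw [← setIntegral_congr_fun measurableSet_ball hWball, hcov, smul_eq_mul]
      congr 1
      exact integral_congr_ae hGGg
    have hI2 : ∫ x in D \ Metric.ball a ε, W x =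
        ((volume D).toReal - ε ^ N * (volume (Metric.ball (0 : Vec N) 1)).toReal) * f b₀ ξ₀ := by
      rw [← setIntegral_congr_fun hmeasd hWrest, setIntegral_const, smul_eq_mul]
      congr 1
      rw [measureReal_def, measure_diff hball measurableSet_ball.nullMeasurableSet measure_ball_lt_top.ne,
        ENNReal.toReal_sub_of_le (measure_mono hball) hDfin.ne, hballvol]
    rw [hsplit, hI1, hI2, mul_add] at key
    rw [← mul_add] at key
    exact ⟨arith_key hdpos hεN hβpos key, fun hni => absurd hInt hni⟩
  · have hNIGg : ¬ IntegrableOn (fun x => f (b₀ + g x) (ξ₀ + fderiv ℝ φ x))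
        (Metric.ball (0 : Vec N) 1) volume := fun h => hInt (h.congr hGGg)
    have hNIA : ¬ IntegrableOn
        (fun x => f (b₀ + g (ε⁻¹ • (x - a))) (ξ₀ + fderiv ℝ φ (ε⁻¹ • (x - a))))
        (Metric.ball a ε) volume := fun h => hNIGg (hcovInt.mp h)
    have hNW : ¬ IntegrableOn W D volume := by
      intro h
      apply hNIA
      exact (h.mono_set hball).congr_fun (fun x hx => (hWball hx).symm) measurableSet_ball
    have h0 : ∫ x in D, W x = 0 := integral_undef hNW
    rw [h0, mul_zero] at key
    have hG0 : ∫ x in Metric.ball (0 : Vec N) 1, f (b₀ + η x) (ξ₀ + fderiv ℝ φ x) = 0 :=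
      integral_undef hInt
    refine ⟨?_, fun _ => key⟩
    rw [hG0, mul_zero]
    exact key

end AuxRecession

set_option maxHeartbeats 1000000 in
/-- Proposition `proprecession` 1.: if `f` is nonnegative,
convex-quasiconvex and satisfies `(H1)_p`, `(H2)_p` for some `1 < p < ∞`, then its
recession function `f^∞` is convex-quasiconvex. -/
theorem recessionFn_isConvexQuasiconvex
    {N n m : ℕ} (p : ℝ) (hp : 1 < p)
    (f : Vec m → Mat n N → ℝ) (hf0 : ∀ b ξ, 0 ≤ f b ξ)
    (hH0 : IsConvexQuasiconvex f) (hH1 : H1p p f) (hH2 : H2p p f) :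
    IsConvexQuasiconvex (recessionFn f) := by
  obtain ⟨C, hC, hH1'⟩ := hH1
  obtain ⟨C', hC', L, hL, τ, hτ, hτ1, hH2'⟩ := hH2
  intro b ξ
  refine ⟨Metric.ball (0 : Vec N) 1, Metric.isOpen_ball, Metric.isBounded_ball,
    Metric.measure_ball_pos volume 0 one_pos, ?_⟩
  intro η hη hη0 φ hφl hφ0
  have hrub : ∀ (b' : Vec m) (ξ' : Mat n N), f b' ξ' ≤ C * (1 + ‖b'‖ ^ p + ‖ξ'‖) :=
    fun b' ξ' => (hH1' b' ξ').2
  by_cases hξ : ξ = 0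
  · subst hξ
    rw [recession_zero f b]
    have h1 : 0 ≤ ∫ x in Metric.ball (0 : Vec N) 1,
        recessionFn f (b + η x) (0 + fderiv ℝ φ x) :=
      integral_nonneg fun x => recession_nonneg hC hf0 hrub _ _
    exact mul_nonneg (inv_nonneg.mpr ENNReal.toReal_nonneg) h1
  · obtain ⟨K, hK⟩ := hφl
    have hξpos : (0:ℝ) < ‖ξ‖ := norm_pos_iff.mpr hξ
    have hbd : ∃ M : ℝ, 0 ≤ M ∧
        ∀ᵐ x ∂(volume.restrict (Metric.ball (0 : Vec N) 1)), ‖η x‖ ≤ M := by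
      refine ⟨(eLpNormEssSup η (volume.restrict (Metric.ball (0 : Vec N) 1))).toReal,
        ENNReal.toReal_nonneg, ?_⟩
      have hlt : eLpNormEssSup η (volume.restrict (Metric.ball (0 : Vec N) 1)) < ⊤ := by
        have h2 := hη.2
        rwa [eLpNorm_exponent_top] at h2
      filter_upwards [ae_le_eLpNormEssSup
        (f := η) (μ := volume.restrict (Metric.ball (0 : Vec N) 1))] with x hx
      have h3 : ((‖η x‖₊ : ℝ≥0∞)).toReal ≤
          (eLpNormEssSup η (volume.restrict (Metric.ball (0 : Vec N) 1))).toReal :=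
        ENNReal.toReal_mono hlt.ne hx
      simpa using h3
    obtain ⟨M, hM0, hMb⟩ := hbd
    obtain ⟨K1, hK1⟩ := exists_nat_gt (max (C * C / ‖ξ‖) 1)
    have hK1b : (1:ℝ) < (K1:ℝ) := lt_of_le_of_lt (le_max_right _ _) hK1
    have hCK1 : C * C < (K1:ℝ) * ‖ξ‖ :=
      (div_lt_iff₀ hξpos).mp (lt_of_le_of_lt (le_max_left _ _) hK1)
    have hksc : ∀ k : ℕ, K1 ≤ k → (1:ℝ) ≤ (k:ℝ) ∧ C * C < (k:ℝ) * ‖ξ‖ := by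
      intro k hk
      have hc : (K1:ℝ) ≤ (k:ℝ) := by exact_mod_cast hk
      refine ⟨by linarith, ?_⟩
      calc C * C < (K1:ℝ) * ‖ξ‖ := hCK1
        _ ≤ (k:ℝ) * ‖ξ‖ := mul_le_mul_of_nonneg_right hc (norm_nonneg ξ)
    have fpos : ∀ k : ℕ, K1 ≤ k → 0 < f b ((k:ℝ) • ξ) := by
      intro k hk
      obtain ⟨hk1, hkC⟩ := hksc k hk
      have hk0 : (0:ℝ) < (k:ℝ) := lt_of_lt_of_le one_pos hk1
      have hlow := (hH1' b ((k:ℝ) • ξ)).1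
      have hns : ‖(k:ℝ) • ξ‖ = (k:ℝ) * ‖ξ‖ := by
        rw [norm_smul (k:ℝ) ξ, Real.norm_eq_abs, abs_of_pos hk0]
      rw [hns] at hlow
      have hbp : (0:ℝ) ≤ ‖b‖ ^ p := Real.rpow_nonneg (norm_nonneg b) p
      have hCClt : C < 1 / C * (‖b‖ ^ p + (k:ℝ) * ‖ξ‖) := by
        rw [one_div, inv_mul_eq_div, lt_div_iff₀ hC]
        nlinarith
      linarith
    have Gkey : ∀ k : ℕ, K1 ≤ k →
        (f b ((k:ℝ) • ξ) ≤ (volume (Metric.ball (0 : Vec N) 1)).toReal⁻¹ *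
          ∫ x in Metric.ball (0 : Vec N) 1, f (b + η x) ((k:ℝ) • (ξ + fderiv ℝ φ x))) ∧
        IntegrableOn (fun x => f (b + η x) ((k:ℝ) • (ξ + fderiv ℝ φ x)))
          (Metric.ball (0 : Vec N) 1) volume := by
      intro k hk
      obtain ⟨hk1, -⟩ := hksc k hk
      have hk0 : (0:ℝ) < (k:ℝ) := lt_of_lt_of_le one_pos hk1
      have hfd : ∀ x : Vec N, (k:ℝ) • ξ + fderiv ℝ (fun y => (k:ℝ) • φ y) x
          = (k:ℝ) • (ξ + fderiv ℝ φ x) := by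
        intro x
        rw [fderiv_csmul (k:ℝ) hk0.ne' φ x]
        exact (smul_add (k:ℝ) ξ (fderiv ℝ φ x)).symm
      have hlip' := lipschitz_const_smul (c := (k:ℝ)) hK
      have hz' : ∀ x ∉ Metric.ball (0 : Vec N) 1, (k:ℝ) • φ x = 0 := fun x hx => by
        rw [hφ0 x hx]
        exact smul_zero (M := ℝ) (A := Vec n) _
      have hkb := key_ball f hH0 b ((k:ℝ) • ξ) η hη hη0 (fun y => (k:ℝ) • φ y) hlip' hz'
      have hfun : (fun x => f (b + η x) ((k:ℝ) • ξ + fderiv ℝ (fun y => (k:ℝ) • φ y) x))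
          = fun x => f (b + η x) ((k:ℝ) • (ξ + fderiv ℝ φ x)) := funext fun x => by rw [hfd x]
      rw [hfun] at hkb
      refine ⟨hkb.1, ?_⟩
      by_contra hni
      exact absurd (hkb.2 hni) (not_le.mpr (fpos k hk))
    have hζbd : ∀ x : Vec N, ‖ξ + fderiv ℝ φ x‖ ≤ ‖ξ‖ + (K:ℝ) := fun x => by
      have h5 := norm_fderiv_le_of_lipschitz ℝ hK (x₀ := x)
      calc ‖ξ + fderiv ℝ φ x‖ ≤ ‖ξ‖ + ‖fderiv ℝ φ x‖ := norm_add_le _ _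
        _ ≤ ‖ξ‖ + (K:ℝ) := by linarith
    set Cb : ℝ := C * (1 + (‖b‖ + M) ^ p) + C * (‖ξ‖ + (K:ℝ)) with hCb
    have hkk : ∀ h : ℕ, K1 ≤ h + K1 := fun h => Nat.le_add_left K1 h
    have hk0' : ∀ h : ℕ, (0:ℝ) < ((h + K1 : ℕ) : ℝ) := fun h =>
      lt_of_lt_of_le one_pos (hksc _ (hkk h)).1
    have hFmeas : ∀ h : ℕ, AEStronglyMeasurable
        (fun x => f (b + η x) (((h + K1 : ℕ) : ℝ) • (ξ + fderiv ℝ φ x)) / ((h + K1 : ℕ) : ℝ))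
        (volume.restrict (Metric.ball (0 : Vec N) 1)) := fun h =>
      (((Gkey _ (hkk h)).2).div_const ((h + K1 : ℕ) : ℝ)).aestronglyMeasurable
    have hFbd : ∀ h : ℕ, ∀ᵐ x ∂(volume.restrict (Metric.ball (0 : Vec N) 1)),
        ‖f (b + η x) (((h + K1 : ℕ) : ℝ) • (ξ + fderiv ℝ φ x)) / ((h + K1 : ℕ) : ℝ)‖ ≤ Cb := by
      intro h
      filter_upwards [hMb] with x hx
      have hk1 : (1:ℝ) ≤ ((h + K1 : ℕ) : ℝ) := (hksc _ (hkk h)).1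
      have hk0 : (0:ℝ) < ((h + K1 : ℕ) : ℝ) := hk0' h
      have hnn : 0 ≤ f (b + η x) (((h + K1 : ℕ) : ℝ) • (ξ + fderiv ℝ φ x)) / ((h + K1 : ℕ) : ℝ) :=
        div_nonneg (hf0 _ _) hk0.le
      rw [Real.norm_eq_abs, abs_of_nonneg hnn]
      have hns : ‖((h + K1 : ℕ) : ℝ) • (ξ + fderiv ℝ φ x)‖
          = ((h + K1 : ℕ) : ℝ) * ‖ξ + fderiv ℝ φ x‖ := by
        rw [norm_smul ((h + K1 : ℕ) : ℝ) (ξ + fderiv ℝ φ x), Real.norm_eq_abs, abs_of_pos hk0]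
      have hup := hrub (b + η x) (((h + K1 : ℕ) : ℝ) • (ξ + fderiv ℝ φ x))
      rw [hns] at hup
      have hbub : ‖b + η x‖ ^ p ≤ (‖b‖ + M) ^ p := by
        apply Real.rpow_le_rpow (norm_nonneg _) ?_ (le_of_lt (lt_trans one_pos hp))
        calc ‖b + η x‖ ≤ ‖b‖ + ‖η x‖ := norm_add_le _ _
          _ ≤ ‖b‖ + M := by linarith
      have hbp2 : (0:ℝ) ≤ ‖b + η x‖ ^ p := Real.rpow_nonneg (norm_nonneg _) p
      have h1 : f (b + η x) (((h + K1 : ℕ) : ℝ) • (ξ + fderiv ℝ φ x)) / ((h + K1 : ℕ) : ℝ)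
          ≤ C * (1 + ‖b + η x‖ ^ p + ((h + K1 : ℕ) : ℝ) * ‖ξ + fderiv ℝ φ x‖)
            / ((h + K1 : ℕ) : ℝ) := by gcongr
      have h2 : C * (1 + ‖b + η x‖ ^ p + ((h + K1 : ℕ) : ℝ) * ‖ξ + fderiv ℝ φ x‖)
            / ((h + K1 : ℕ) : ℝ)
          = C * (1 + ‖b + η x‖ ^ p) / ((h + K1 : ℕ) : ℝ) + C * ‖ξ + fderiv ℝ φ x‖ := by
        field_simp
      have h3 : C * (1 + ‖b + η x‖ ^ p) / ((h + K1 : ℕ) : ℝ) ≤ C * (1 + ‖b + η x‖ ^ p) :=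
        div_le_self (mul_nonneg hC.le (by linarith)) hk1
      have h6 : C * (1 + ‖b + η x‖ ^ p) ≤ C * (1 + (‖b‖ + M) ^ p) :=
        mul_le_mul_of_nonneg_left (by linarith) hC.le
      have h7 : C * ‖ξ + fderiv ℝ φ x‖ ≤ C * (‖ξ‖ + (K:ℝ)) :=
        mul_le_mul_of_nonneg_left (hζbd x) hC.le
      calc f (b + η x) (((h + K1 : ℕ) : ℝ) • (ξ + fderiv ℝ φ x)) / ((h + K1 : ℕ) : ℝ)
          ≤ C * (1 + ‖b + η x‖ ^ p) / ((h + K1 : ℕ) : ℝ) + C * ‖ξ + fderiv ℝ φ x‖ := by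
            rw [← h2]; exact h1
        _ ≤ C * (1 + (‖b‖ + M) ^ p) + C * (‖ξ‖ + (K:ℝ)) := by linarith
        _ = Cb := hCb.symm
    have hFlim : ∀ᵐ x ∂(volume.restrict (Metric.ball (0 : Vec N) 1)),
        Tendsto (fun h : ℕ =>
            f (b + η x) (((h + K1 : ℕ) : ℝ) • (ξ + fderiv ℝ φ x)) / ((h + K1 : ℕ) : ℝ)) atTop
          (𝓝 (recessionFn f (b + η x) (ξ + fderiv ℝ φ x))) := by
      refine Eventually.of_forall fun x => ?_
      by_cases hz : ξ + fderiv ℝ φ x = 0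
      · have heq : (fun h : ℕ =>
              f (b + η x) (((h + K1 : ℕ) : ℝ) • (ξ + fderiv ℝ φ x)) / ((h + K1 : ℕ) : ℝ))
            = fun h : ℕ => f (b + η x) 0 / ((h + K1 : ℕ) : ℝ) := by
          funext h
          rw [hz]
          exact congrArg (fun ζ => f (b + η x) ζ / ((h + K1 : ℕ) : ℝ))
            (smul_zero (M := ℝ) (A := Mat n N) _)
        rw [heq, hz, recession_zero]
        exact (tendsto_const_div_atTop_nhds_zero_nat (f (b + η x) 0)).comp
          (tendsto_add_atTop_nat K1)
      · exact (recession_tendsto hτ hH2' (b + η x) hz).comp (tendsto_add_atTop_nat K1)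
    have hDCT := MeasureTheory.tendsto_integral_of_dominated_convergence (fun _ => Cb)
      hFmeas (integrableOn_const measure_ball_lt_top.ne) hFbd hFlim
    have hineq : ∀ h : ℕ,
        f b (((h + K1 : ℕ) : ℝ) • ξ) / ((h + K1 : ℕ) : ℝ)
          ≤ (volume (Metric.ball (0 : Vec N) 1)).toReal⁻¹ *
            ∫ x in Metric.ball (0 : Vec N) 1,
              f (b + η x) (((h + K1 : ℕ) : ℝ) • (ξ + fderiv ℝ φ x)) / ((h + K1 : ℕ) : ℝ) := by
      intro h
      have hg := (Gkey _ (hkk h)).1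
      have hk0 : (0:ℝ) < ((h + K1 : ℕ) : ℝ) := hk0' h
      have hid : (∫ x in Metric.ball (0 : Vec N) 1,
              f (b + η x) (((h + K1 : ℕ) : ℝ) • (ξ + fderiv ℝ φ x)) / ((h + K1 : ℕ) : ℝ))
          = (∫ x in Metric.ball (0 : Vec N) 1,
              f (b + η x) (((h + K1 : ℕ) : ℝ) • (ξ + fderiv ℝ φ x))) / ((h + K1 : ℕ) : ℝ) :=
        integral_div _ _
      rw [hid, ← mul_div_assoc]
      gcongr
    have hulim : Tendsto (fun h : ℕ => f b (((h + K1 : ℕ) : ℝ) • ξ) / ((h + K1 : ℕ) : ℝ)) atTop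
        (𝓝 (recessionFn f b ξ)) :=
      (recession_tendsto hτ hH2' b hξ).comp (tendsto_add_atTop_nat K1)
    have hvlim : Tendsto (fun h : ℕ =>
        (volume (Metric.ball (0 : Vec N) 1)).toReal⁻¹ *
          ∫ x in Metric.ball (0 : Vec N) 1,
            f (b + η x) (((h + K1 : ℕ) : ℝ) • (ξ + fderiv ℝ φ x)) / ((h + K1 : ℕ) : ℝ)) atTop
        (𝓝 ((volume (Metric.ball (0 : Vec N) 1)).toReal⁻¹ *
          ∫ x in Metric.ball (0 : Vec N) 1,
            recessionFn f (b + η x) (ξ + fderiv ℝ φ x))) :=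
      hDCT.const_mul _
    exact le_of_tendsto_of_tendsto' hulim hvlim hineq

end
end

section
/- Let 1 < p < ∞ and let f : ℝ^m × ℝ^{n×N} → [0,∞) be convex-quasiconvex and satisfy (H1)_p. Then the recession function f^∞(b,ξ) := limsup_{t→∞} f(b,tξ)/t is constant with respect to b: f^∞(b,ξ) = f^∞(b',ξ) for every b, b' ∈ ℝ^m and every ξ ∈ ℝ^{n×N}. Moreover f^∞ is continuous. -/
open MeasureTheory Filter Topology Bornology
open scoped RealInnerProductSpace ENNReal

noncomputable section

variable {N n m : ℕ}

section AuxProofs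

set_option maxHeartbeats 1600000

lemma exists_subset_volume_eq {N : ℕ} (hN : 0 < N) {D : Set (Vec N)} (hDo : IsOpen D)
    (hDb : IsBounded D) {lam : ℝ} (h0 : 0 ≤ lam) (h1 : lam ≤ 1) :
    ∃ S : Set (Vec N), MeasurableSet S ∧ S ⊆ D ∧
      (volume S).toReal = lam * (volume D).toReal := by
  haveI : Nontrivial (Vec N) := by
    refine Module.nontrivial_of_finrank_pos (R := ℝ) (?_ : 0 < _)
    rw [finrank_euclideanSpace_fin]; omega
  obtain ⟨R, hR⟩ := hDb.subset_closedBall 0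
  have hDfin : volume D ≠ ⊤ :=
    ((measure_mono hR).trans_lt measure_closedBall_lt_top).ne
  set Nn := Module.finrank ℝ (Vec N) with hNn
  set κ := (volume (Metric.ball (0 : Vec N) 1)).toReal with hκ
  set Φ : ℝ → ℝ := fun t => κ * t ^ Nn with hΦdef
  set G : ℝ → ℝ := fun r => (volume (D ∩ Metric.ball 0 r)).toReal with hGdef
  have hfin : ∀ r : ℝ, volume (D ∩ Metric.ball 0 r) ≠ ⊤ :=
    fun r => ((measure_mono Set.inter_subset_left).trans_lt hDfin.lt_top).ne
  have hmono : ∀ r s : ℝ, r ≤ s → G r ≤ G s := fun r s hrs =>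
    ENNReal.toReal_mono (hfin s)
      (measure_mono (Set.inter_subset_inter_right _ (Metric.ball_subset_ball hrs)))
  have hballR : ∀ r : ℝ, 0 ≤ r → (volume (Metric.ball (0 : Vec N) r)).toReal = Φ r := by
    intro r hr
    rw [Measure.addHaar_ball volume 0 hr, ENNReal.toReal_mul,
      ENNReal.toReal_ofReal (pow_nonneg hr _)]
    simp only [hΦdef]; ring
  have hkey : ∀ r s : ℝ, 0 ≤ r → r ≤ s → G s - G r ≤ Φ s - Φ r := by
    intro r s hr hrs
    have hsub : D ∩ Metric.ball 0 s ⊆ (D ∩ Metric.ball 0 r) ∪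
        (Metric.ball (0 : Vec N) s \ Metric.ball 0 r) := by
      intro x hx
      by_cases hxr : x ∈ Metric.ball (0 : Vec N) r
      · exact Or.inl ⟨hx.1, hxr⟩
      · exact Or.inr ⟨hx.2, hxr⟩
    have hshellfin : volume (Metric.ball (0 : Vec N) s \ Metric.ball 0 r) ≠ ⊤ :=
      ((measure_mono (Set.diff_subset.trans Metric.ball_subset_closedBall)).trans_lt
        measure_closedBall_lt_top).ne
    have h2 : volume (D ∩ Metric.ball 0 s) ≤ volume (D ∩ Metric.ball 0 r) +
        volume (Metric.ball (0 : Vec N) s \ Metric.ball 0 r) :=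
      (measure_mono hsub).trans (measure_union_le _ _)
    have h3 : G s ≤ G r + (volume (Metric.ball (0 : Vec N) s \ Metric.ball 0 r)).toReal := by
      have := ENNReal.toReal_mono (by
        exact ENNReal.add_ne_top.2 ⟨hfin r, hshellfin⟩) h2
      rwa [ENNReal.toReal_add (hfin r) hshellfin] at this
    have h4 : (volume (Metric.ball (0 : Vec N) s \ Metric.ball 0 r)).toReal = Φ s - Φ r := by
      rw [measure_diff (Metric.ball_subset_ball hrs) measurableSet_ball.nullMeasurableSet
        ((measure_mono Metric.ball_subset_closedBall).trans_lt measure_closedBall_lt_top).ne,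
        ENNReal.toReal_sub_of_le (measure_mono (Metric.ball_subset_ball hrs))
          ((measure_mono Metric.ball_subset_closedBall).trans_lt measure_closedBall_lt_top).ne,
        hballR r hr, hballR s (hr.trans hrs)]
    linarith [h3, h4.le, h4.ge]
  set T := |R| + 1 with hT
  have hT0 : (0:ℝ) ≤ T := by positivity
  have hcont : ContinuousOn G (Set.Icc 0 T) := by
    intro r hr
    have hΦc : Continuous Φ := continuous_const.mul (continuous_pow Nn)
    rw [Metric.continuousWithinAt_iff]
    intro ε hε
    obtain ⟨δ, hδ0, hδ⟩ := Metric.continuous_iff.1 hΦc r ε hε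
    refine ⟨δ, hδ0, fun {y} hy hyd => ?_⟩
    have hΦd := hδ y hyd
    have habs : |G y - G r| ≤ |Φ y - Φ r| := by
      rcases le_total y r with hyr | hry
      · have h5 := hkey y r hy.1 hyr
        have h6 := hmono y r hyr
        rw [abs_sub_comm (G y), abs_sub_comm (Φ y)]
        rw [abs_of_nonneg (by linarith)]
        exact h5.trans (le_abs_self _)
      · have h5 := hkey r y hr.1 hry
        have h6 := hmono r y hry
        rw [abs_of_nonneg (by linarith)]
        exact h5.trans (le_abs_self _)
    rw [Real.dist_eq] at hΦd ⊢
    exact habs.trans_lt hΦd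
  have hG0 : G 0 = 0 := by
    simp only [hGdef, Metric.ball_zero, Set.inter_empty, measure_empty, ENNReal.toReal_zero]
  have hGT : G T = (volume D).toReal := by
    have : D ∩ Metric.ball 0 T = D := by
      refine Set.inter_eq_self_of_subset_left (hR.trans (Metric.closedBall_subset_ball ?_))
      rw [hT]; exact (le_abs_self R).trans_lt (by linarith)
    rw [hGdef]; simp only; rw [this]
  have hIVT := intermediate_value_Icc hT0 hcont
  have hmem : lam * (volume D).toReal ∈ Set.Icc (G 0) (G T) := by
    rw [hG0, hGT]
    constructor
    · positivity
    · exact mul_le_of_le_one_left ENNReal.toReal_nonneg h1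
  obtain ⟨r, _, hGr⟩ := hIVT hmem
  exact ⟨D ∩ Metric.ball 0 r, hDo.measurableSet.inter measurableSet_ball,
    Set.inter_subset_left, hGr⟩

lemma limsup_le_add' (u v : ℝ → ℝ) (c Mv : ℝ)
    (h : ∀ᶠ t in atTop, u t ≤ v t + c)
    (hu0 : ∀ᶠ t in atTop, 0 ≤ u t)
    (hv0 : ∀ᶠ t in atTop, 0 ≤ v t)
    (hvM : ∀ᶠ t in atTop, v t ≤ Mv) :
    limsup u atTop ≤ limsup v atTop + c := by
  have hvc : IsBoundedUnder (· ≤ ·) atTop (fun t => v t + c) :=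
    isBoundedUnder_of_eventually_le (a := Mv + c) (hvM.mono fun t ht => by linarith)
  have hucob : IsCoboundedUnder (· ≤ ·) atTop u :=
    isCoboundedUnder_le_of_eventually_le atTop hu0
  have h1 : limsup u atTop ≤ limsup (fun t => v t + c) atTop :=
    limsup_le_limsup h hucob hvc
  rwa [limsup_add_const atTop v c
    (isBoundedUnder_of_eventually_le hvM)
    (isCoboundedUnder_le_of_eventually_le atTop hv0)] at h1

lemma cq_convex_b {N n m : ℕ} (hN : 0 < N) (f : Vec m → Mat n N → ℝ)
    (hH0 : IsConvexQuasiconvex f) (b₁ b₂ : Vec m) {lam : ℝ} (h0 : 0 ≤ lam) (h1 : lam ≤ 1)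
    (Ξ : Mat n N) :
    f (lam • b₁ + (1 - lam) • b₂) Ξ ≤ lam * f b₁ Ξ + (1 - lam) * f b₂ Ξ := by
  classical
  set b' := lam • b₁ + (1 - lam) • b₂ with hb'
  obtain ⟨D, hDo, hDb, hDpos, hD⟩ := hH0 b' Ξ
  have hDfin : volume D < ⊤ := by
    obtain ⟨R, hR⟩ := hDb.subset_closedBall 0
    exact (measure_mono hR).trans_lt measure_closedBall_lt_top
  obtain ⟨S, hSm, hSsub, hSvol⟩ := exists_subset_volume_eq hN hDo hDb h0 h1
  have hSfin : volume S ≠ ⊤ := ((measure_mono hSsub).trans_lt hDfin).ne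
  have hDSvol : (volume (D \ S)).toReal = (1 - lam) * (volume D).toReal := by
    rw [measure_diff hSsub hSm.nullMeasurableSet hSfin,
      ENNReal.toReal_sub_of_le (measure_mono hSsub) hDfin.ne, hSvol]
    ring
  -- the test function η
  set η : Vec N → Vec m := S.piecewise (fun _ => b₁ - b') (fun _ => b₂ - b') with hη
  have hηsm : StronglyMeasurable η :=
    StronglyMeasurable.piecewise hSm stronglyMeasurable_const stronglyMeasurable_const
  have hηbd : ∀ x, ‖η x‖ ≤ max ‖b₁ - b'‖ ‖b₂ - b'‖ := by
    intro x
    by_cases hx : x ∈ S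
    · rw [hη, Set.piecewise_eq_of_mem _ _ _ hx]; exact le_max_left _ _
    · rw [hη, Set.piecewise_eq_of_notMem _ _ _ hx]; exact le_max_right _ _
  have hηℒ : MemLp η ⊤ (volume.restrict D) :=
    memLp_top_of_bound hηsm.aestronglyMeasurable _ (ae_of_all _ hηbd)
  haveI : IsFiniteMeasure (volume.restrict D) :=
    ⟨by rwa [Measure.restrict_apply_univ]⟩
  have hηint : IntegrableOn η D volume := hηℒ.integrable le_top
  have hDsplit : D = S ∪ (D \ S) := (Set.union_diff_cancel hSsub).symm
  have hdisj : Disjoint S (D \ S) := Set.disjoint_sdiff_right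
  have hDSm : MeasurableSet (D \ S) := hDo.measurableSet.diff hSm
  have hη0 : (∫ x in D, η x) = 0 := by
    rw [hDsplit, setIntegral_union hdisj hDSm (hηint.mono_set hSsub)
      (hηint.mono_set Set.diff_subset)]
    have e1 : (∫ x in S, η x) = (volume S).toReal • (b₁ - b') := by
      rw [setIntegral_congr_fun (f := η) (g := fun _ => b₁ - b') hSm
        (fun x hx => Set.piecewise_eq_of_mem _ _ _ hx), setIntegral_const, measureReal_def]
    have e2 : (∫ x in D \ S, η x) = (volume (D \ S)).toReal • (b₂ - b') := by
      rw [setIntegral_congr_fun (f := η) (g := fun _ => b₂ - b') hDSm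
        (fun x hx => Set.piecewise_eq_of_notMem _ _ _ hx.2), setIntegral_const, measureReal_def]
    rw [e1, e2, hSvol, hDSvol]
    have : (lam * (volume D).toReal) • (b₁ - b') + ((1 - lam) * (volume D).toReal) • (b₂ - b')
        = (volume D).toReal • (lam • b₁ + (1 - lam) • b₂ - b') := by
      module
    rw [this, hb']; simp
  have key := hD η hηℒ hη0 (fun _ => 0) ⟨0, LipschitzWith.const 0⟩ (fun _ _ => rfl)
  have hfd : (fun _ : Vec N => fderiv ℝ (fun _ : Vec N => (0 : Vec n))) = fun _ => 0 := by
    ext x; simp [fderiv_const]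
  have hintegrand : ∀ x ∈ D, f (b' + η x) (Ξ + fderiv ℝ (fun _ : Vec N => (0 : Vec n)) x)
      = S.piecewise (fun _ => f b₁ Ξ) (fun _ => f b₂ Ξ) x := by
    intro x _
    have hder : fderiv ℝ (fun _ : Vec N => (0 : Vec n)) x = 0 := fderiv_const_apply 0
    by_cases hx : x ∈ S
    · rw [hη, Set.piecewise_eq_of_mem _ _ _ hx, Set.piecewise_eq_of_mem _ _ _ hx, hder,
        add_zero, add_sub_cancel]
    · rw [hη, Set.piecewise_eq_of_notMem _ _ _ hx, Set.piecewise_eq_of_notMem _ _ _ hx, hder,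
        add_zero, add_sub_cancel]
  have hIval : (∫ x in D, f (b' + η x) (Ξ + fderiv ℝ (fun _ : Vec N => (0 : Vec n)) x))
      = lam * (volume D).toReal * f b₁ Ξ + (1 - lam) * (volume D).toReal * f b₂ Ξ := by
    rw [setIntegral_congr_fun hDo.measurableSet hintegrand]
    have hpint : IntegrableOn (S.piecewise (fun _ => f b₁ Ξ) (fun _ => f b₂ Ξ)) D volume := by
      apply Integrable.mono' (g := fun _ => max |f b₁ Ξ| |f b₂ Ξ|) (integrableOn_const hDfin.ne)
      · exact (StronglyMeasurable.piecewise hSm stronglyMeasurable_const stronglyMeasurable_const).aestronglyMeasurable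
      · refine ae_of_all _ fun x => ?_
        by_cases hx : x ∈ S
        · rw [Set.piecewise_eq_of_mem _ _ _ hx, Real.norm_eq_abs]; exact le_max_left _ _
        · rw [Set.piecewise_eq_of_notMem _ _ _ hx, Real.norm_eq_abs]; exact le_max_right _ _
    rw [hDsplit, setIntegral_union hdisj hDSm
      (hpint.mono_set hSsub)
      (hpint.mono_set Set.diff_subset),
      setIntegral_congr_fun (g := fun _ => f b₁ Ξ) hSm
        (fun x hx => Set.piecewise_eq_of_mem _ _ _ hx),
      setIntegral_congr_fun (g := fun _ => f b₂ Ξ) hDSm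
        (fun x hx => Set.piecewise_eq_of_notMem _ _ _ hx.2),
      setIntegral_const, setIntegral_const, measureReal_def, measureReal_def, hSvol, hDSvol, smul_eq_mul, smul_eq_mul,
      ← hDsplit]
  rw [hIval] at key
  have hV : 0 < (volume D).toReal := ENNReal.toReal_pos hDpos.ne' hDfin.ne
  calc f b' Ξ ≤ (volume D).toReal⁻¹ *
      (lam * (volume D).toReal * f b₁ Ξ + (1 - lam) * (volume D).toReal * f b₂ Ξ) := key
    _ = lam * f b₁ Ξ + (1 - lam) * f b₂ Ξ := by field_simp

lemma cq_lip {N n m : ℕ} (hN : 0 < N) (f : Vec m → Mat n N → ℝ) {p C : ℝ} (hC : 0 < C)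
    (hub : ∀ (b : Vec m) (ξ : Mat n N), f b ξ ≤ C * (1 + ‖b‖ ^ p + ‖ξ‖))
    (hf0 : ∀ b ξ, 0 ≤ f b ξ) (hH0 : IsConvexQuasiconvex f)
    (b : Vec m) (ξ ζ : Mat n N) :
    f b ξ - f b (ξ + ζ) ≤ N * C * ‖ζ‖ := by
  haveI : Nontrivial (Vec N) := by
    refine Module.nontrivial_of_finrank_pos (R := ℝ) (?_ : 0 < _)
    rw [finrank_euclideanSpace_fin]; omega
  have hbp : (0:ℝ) ≤ ‖b‖ ^ p := Real.rpow_nonneg (norm_nonneg _) p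
  set Q : ℝ := N * C * (1 + ‖b‖ ^ p + ‖ξ‖ + ‖ζ‖) with hQ
  have hQ0 : 0 ≤ Q := by positivity
  have key : ∀ δ : ℝ, 0 < δ → δ < 1 →
      f b ξ ≤ f b (ξ + ζ) + N * C * ‖ζ‖ + δ * Q := by
    intro δ hδ0 hδ1
    obtain ⟨D, hDo, hDb, hDpos, hD⟩ := hH0 b ξ
    have hDfin : volume D < ⊤ := by
      obtain ⟨R, hR⟩ := hDb.subset_closedBall 0
      exact (measure_mono hR).trans_lt measure_closedBall_lt_top
    obtain ⟨x₀, hx₀⟩ := nonempty_of_measure_ne_zero hDpos.ne'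
    obtain ⟨ε₀, hε₀, hball⟩ := Metric.isOpen_iff.1 hDo x₀ hx₀
    set r₂ := ε₀ / 2 with hr₂def
    have hr₂ : 0 < r₂ := by positivity
    have hcb : Metric.closedBall x₀ r₂ ⊆ D :=
      (Metric.closedBall_subset_ball (by rw [hr₂def]; linarith)).trans hball
    set r₁ := (1 - δ) * r₂ with hr₁def
    have hr₁0 : 0 < r₁ := by rw [hr₁def]; nlinarith
    have hr₁₂ : r₁ < r₂ := by rw [hr₁def]; nlinarith
    set d := r₂ - r₁ with hddef
    have hd0 : 0 < d := by rw [hddef]; linarith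
    have hdval : d = δ * r₂ := by rw [hddef, hr₁def]; ring
    set θ : Vec N → ℝ := fun x => max 0 (min 1 ((r₂ - ‖x - x₀‖) / d)) with hθdef
    have hθ01 : ∀ x, 0 ≤ θ x ∧ θ x ≤ 1 := fun x =>
      ⟨le_max_left _ _, max_le (by linarith) (min_le_left _ _)⟩
    have hθ1 : ∀ x, ‖x - x₀‖ ≤ r₁ → θ x = 1 := by
      intro x hx
      have h1 : (1:ℝ) ≤ (r₂ - ‖x - x₀‖) / d := by
        rw [le_div_iff₀ hd0]; linarith
      rw [hθdef]; simp only
      rw [min_eq_left h1, max_eq_right zero_le_one]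
    have hθ0 : ∀ x, r₂ ≤ ‖x - x₀‖ → θ x = 0 := by
      intro x hx
      have h1 : (r₂ - ‖x - x₀‖) / d ≤ 0 :=
        div_nonpos_of_nonpos_of_nonneg (by linarith) hd0.le
      rw [hθdef]; simp only
      rw [min_eq_right (h1.trans zero_le_one), max_eq_left h1]
    have hθlip : ∀ x y, |θ x - θ y| ≤ ‖x - y‖ / d := by
      intro x y
      have h1 : |θ x - θ y| ≤ |(r₂ - ‖x - x₀‖) / d - (r₂ - ‖y - x₀‖) / d| := by
        refine le_trans ?_ (le_trans
          (abs_min_sub_min_le_max 1 ((r₂ - ‖x - x₀‖) / d) 1 ((r₂ - ‖y - x₀‖) / d)) ?_)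
        · rw [hθdef]; simp only
          rw [max_comm 0 (min 1 ((r₂ - ‖x - x₀‖) / d)), max_comm 0 (min 1 ((r₂ - ‖y - x₀‖) / d))]
          exact abs_max_sub_max_le_abs _ _ _
        · simp
      refine h1.trans ?_
      rw [div_sub_div_same, abs_div, abs_of_pos hd0]
      have h2 : |r₂ - ‖x - x₀‖ - (r₂ - ‖y - x₀‖)| ≤ ‖x - y‖ := by
        have h3 : r₂ - ‖x - x₀‖ - (r₂ - ‖y - x₀‖) = ‖y - x₀‖ - ‖x - x₀‖ := by ring
        rw [h3]
        refine (abs_norm_sub_norm_le _ _).trans ?_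
        rw [show y - x₀ - (x - x₀) = y - x by abel, norm_sub_rev]
      gcongr
    set K := ‖ζ‖ * (1 + 1 / δ) with hKdef
    have hK0 : 0 ≤ K := by positivity
    set φ : Vec N → Vec n := fun x => θ x • ζ (x - x₀) with hφdef
    have hclaim : ∀ x y, ‖x - x₀‖ ≤ ‖y - x₀‖ → ‖φ x - φ y‖ ≤ K * ‖x - y‖ := by
      intro x y hxy
      have hdecomp : φ x - φ y = θ y • ζ (x - y) + (θ x - θ y) • ζ (x - x₀) := by
        have h4 : ζ (x - y) = ζ (x - x₀) - ζ (y - x₀) := by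
          rw [← map_sub]; congr 1; abel
        rw [hφdef]; simp only; rw [h4]; module
      rw [hdecomp]
      have t1 : ‖θ y • ζ (x - y)‖ ≤ ‖ζ‖ * ‖x - y‖ := by
        rw [norm_smul, Real.norm_eq_abs, abs_of_nonneg (hθ01 y).1]
        calc θ y * ‖ζ (x - y)‖ ≤ 1 * ‖ζ (x - y)‖ :=
          mul_le_mul_of_nonneg_right (hθ01 y).2 (norm_nonneg _)
        _ = ‖ζ (x - y)‖ := one_mul _
        _ ≤ ‖ζ‖ * ‖x - y‖ := ζ.le_opNorm _
      have t2 : ‖(θ x - θ y) • ζ (x - x₀)‖ ≤ ‖ζ‖ * (1 / δ) * ‖x - y‖ := by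
        by_cases hx2 : ‖x - x₀‖ ≤ r₂
        · rw [norm_smul, Real.norm_eq_abs]
          calc |θ x - θ y| * ‖ζ (x - x₀)‖ ≤ (‖x - y‖ / d) * (‖ζ‖ * r₂) := by
                refine mul_le_mul (hθlip x y) ((ζ.le_opNorm _).trans ?_) (norm_nonneg _)
                  (by positivity)
                exact mul_le_mul_of_nonneg_left hx2 (norm_nonneg _)
            _ = ‖ζ‖ * (1 / δ) * ‖x - y‖ := by
                rw [hdval]; field_simp
        · push_neg at hx2
          rw [hθ0 x hx2.le, hθ0 y (hx2.le.trans hxy)]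
          simp [norm_smul]
          positivity
      calc ‖θ y • ζ (x - y) + (θ x - θ y) • ζ (x - x₀)‖
          ≤ ‖θ y • ζ (x - y)‖ + ‖(θ x - θ y) • ζ (x - x₀)‖ := norm_add_le _ _
        _ ≤ ‖ζ‖ * ‖x - y‖ + ‖ζ‖ * (1 / δ) * ‖x - y‖ := add_le_add t1 t2
        _ = K * ‖x - y‖ := by rw [hKdef]; ring
    have hφlip : LipschitzWith K.toNNReal φ := by
      refine LipschitzWith.of_dist_le_mul fun x y => ?_
      rw [dist_eq_norm, dist_eq_norm, Real.coe_toNNReal K hK0]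
      rcases le_total ‖x - x₀‖ ‖y - x₀‖ with h | h
      · exact hclaim x y h
      · rw [norm_sub_rev, norm_sub_rev x y]
        exact hclaim y x h
    have hφ0 : ∀ x ∉ D, φ x = 0 := by
      intro x hx
      have : r₂ ≤ ‖x - x₀‖ := by
        by_contra hcon
        push_neg at hcon
        exact hx (hcb (Metric.mem_closedBall.2 (by rw [dist_eq_norm]; exact hcon.le)))
      rw [hφdef]; simp only [hθ0 x this, zero_smul]
    have hCQ := hD (fun _ => 0)
      (memLp_top_of_bound aestronglyMeasurable_const 0 (ae_of_all _ fun x => by simp))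
      (by simp) φ ⟨K.toNNReal, hφlip⟩ hφ0
    simp only [add_zero] at hCQ
    -- derivative identities
    have hd1 : ∀ x ∈ Metric.ball x₀ r₁, fderiv ℝ φ x = ζ := by
      intro x hx
      have hev : φ =ᶠ[nhds x] fun y => ζ (y - x₀) := by
        refine eventually_of_mem (Metric.isOpen_ball.mem_nhds hx) fun y hy => ?_
        rw [hφdef]; simp only
        rw [hθ1 y (by rw [← dist_eq_norm]; exact (Metric.mem_ball.1 hy).le), one_smul]
      rw [hev.fderiv_eq]
      have h5 : HasFDerivAt (fun y : Vec N => ζ (y - x₀)) ζ x := by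
        have h6 := ζ.hasFDerivAt.comp x ((hasFDerivAt_id x).sub_const x₀)
        rwa [ContinuousLinearMap.comp_id] at h6
      exact h5.fderiv
    have hd0' : ∀ x ∈ D \ Metric.closedBall x₀ r₂, fderiv ℝ φ x = 0 := by
      intro x hx
      have hev : φ =ᶠ[nhds x] fun _ => (0 : Vec n) := by
        refine eventually_of_mem ((Metric.isClosed_closedBall.isOpen_compl).mem_nhds hx.2)
          fun y hy => ?_
        have : r₂ ≤ ‖y - x₀‖ := by
          rw [← dist_eq_norm]
          exact le_of_lt (by simpa [Metric.mem_closedBall] using hy)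
        rw [hφdef]; simp only [hθ0 y this, zero_smul]
      rw [hev.fderiv_eq, fderiv_const_apply]
    have hdb : ∀ x, ‖fderiv ℝ φ x‖ ≤ K := by
      intro x
      have := norm_fderiv_le_of_lipschitz ℝ hφlip (x₀ := x)
      rwa [Real.coe_toNNReal K hK0] at this
    set g : Vec N → ℝ := fun x => f b (ξ + fderiv ℝ φ x) with hgdef
    by_cases hI : IntegrableOn g D volume
    · -- main case
      set A := (volume (Metric.ball x₀ r₁)).toReal with hA
      set B := (volume (Metric.closedBall x₀ r₂)).toReal with hB
      set V := (volume D).toReal with hV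
      set M := C * (1 + ‖b‖ ^ p + ‖ξ‖ + K) with hM
      have hM0 : 0 ≤ M := by positivity
      have hballfin : volume (Metric.ball x₀ r₁) ≠ ⊤ :=
        ((measure_mono Metric.ball_subset_closedBall).trans_lt measure_closedBall_lt_top).ne
      have hcbfin : volume (Metric.closedBall x₀ r₂) ≠ ⊤ := measure_closedBall_lt_top.ne
      have hA0 : 0 < A := ENNReal.toReal_pos (Metric.measure_ball_pos volume x₀ hr₁0).ne' hballfin
      have hB0 : 0 < B := ENNReal.toReal_pos
        (((Metric.measure_ball_pos volume x₀ hr₂).trans_le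
          (measure_mono Metric.ball_subset_closedBall)).ne') hcbfin
      have hsubballs : Metric.ball x₀ r₁ ⊆ Metric.closedBall x₀ r₂ :=
        (Metric.ball_subset_ball hr₁₂.le).trans Metric.ball_subset_closedBall
      have hAB : A ≤ B := ENNReal.toReal_mono hcbfin (measure_mono hsubballs)
      have hBV : B ≤ V := ENNReal.toReal_mono hDfin.ne (measure_mono hcb)
      have hV0 : 0 < V := hB0.trans_le hBV
      have hshellvol : (volume (Metric.closedBall x₀ r₂ \ Metric.ball x₀ r₁)).toReal = B - A := by
        rw [measure_diff hsubballs measurableSet_ball.nullMeasurableSet hballfin,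
          ENNReal.toReal_sub_of_le (measure_mono hsubballs) hcbfin]
      have houtvol : (volume (D \ Metric.closedBall x₀ r₂)).toReal = V - B := by
        rw [measure_diff hcb measurableSet_closedBall.nullMeasurableSet hcbfin,
          ENNReal.toReal_sub_of_le (measure_mono hcb) hDfin.ne]
      have hBA : B - A ≤ N * δ * B := by
        have hAf : A = (1 - δ) ^ N * B := by
          rw [hA, hB, Measure.addHaar_ball volume x₀ hr₁0.le,
            Measure.addHaar_closedBall volume x₀ hr₂.le, finrank_euclideanSpace_fin,
            ENNReal.toReal_mul, ENNReal.toReal_mul,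
            ENNReal.toReal_ofReal (pow_nonneg hr₁0.le _),
            ENNReal.toReal_ofReal (pow_nonneg hr₂.le _), hr₁def, mul_pow]
          ring
        have hbern : 1 + (N : ℝ) * (-δ) ≤ (1 + (-δ)) ^ N :=
          one_add_mul_le_pow (by linarith) N
        have h5 : 1 - (N:ℝ) * δ ≤ (1 - δ) ^ N := by
          rw [show (1:ℝ) - δ = 1 + (-δ) by ring]
          calc 1 - (N:ℝ)*δ = 1 + (N:ℝ)*(-δ) := by ring
            _ ≤ _ := hbern
        linarith [mul_le_mul_of_nonneg_right h5 hB0.le, hAf.le, hAf.ge]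
      -- split the integral
      have hIint : (∫ x in D, g x) ≤ A * f b (ξ + ζ) + (B - A) * M + (V - B) * f b ξ := by
        have e0 : (∫ x in D, g x) = (∫ x in Metric.closedBall x₀ r₂, g x)
            + ∫ x in D \ Metric.closedBall x₀ r₂, g x := by
          rw [← setIntegral_union Set.disjoint_sdiff_right
            (hDo.measurableSet.diff measurableSet_closedBall)
            (hI.mono_set hcb) (hI.mono_set Set.diff_subset), Set.union_diff_cancel hcb]
        have e1 : (∫ x in Metric.closedBall x₀ r₂, g x) = (∫ x in Metric.ball x₀ r₁, g x)
            + ∫ x in Metric.closedBall x₀ r₂ \ Metric.ball x₀ r₁, g x := by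
          rw [← setIntegral_union Set.disjoint_sdiff_right
            (measurableSet_closedBall.diff measurableSet_ball)
            ((hI.mono_set hcb).mono_set hsubballs)
            ((hI.mono_set hcb).mono_set Set.diff_subset), Set.union_diff_cancel hsubballs]
        have e2 : (∫ x in Metric.ball x₀ r₁, g x) = A * f b (ξ + ζ) := by
          rw [setIntegral_congr_fun (g := fun _ => f b (ξ + ζ)) measurableSet_ball
            (fun x hx => by rw [hgdef]; simp only; rw [hd1 x hx]), setIntegral_const,
            measureReal_def, smul_eq_mul]
        have e3 : (∫ x in Metric.closedBall x₀ r₂ \ Metric.ball x₀ r₁, g x) ≤ (B - A) * M := by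
          calc (∫ x in Metric.closedBall x₀ r₂ \ Metric.ball x₀ r₁, g x)
              ≤ ∫ _x in Metric.closedBall x₀ r₂ \ Metric.ball x₀ r₁, M := by
                refine setIntegral_mono_on ((hI.mono_set hcb).mono_set Set.diff_subset)
                  (integrableOn_const (((measure_mono Set.diff_subset).trans_lt
                    measure_closedBall_lt_top)).ne)
                  (measurableSet_closedBall.diff measurableSet_ball) fun x hx => ?_
                rw [hgdef]; simp only
                calc f b (ξ + fderiv ℝ φ x) ≤ C * (1 + ‖b‖ ^ p + ‖ξ + fderiv ℝ φ x‖) := hub _ _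
                  _ ≤ M := by
                    rw [hM]
                    have h6 : ‖ξ + fderiv ℝ φ x‖ ≤ ‖ξ‖ + K :=
                      (norm_add_le _ _).trans (by linarith [hdb x])
                    nlinarith
            _ = (B - A) * M := by rw [setIntegral_const, measureReal_def, smul_eq_mul, hshellvol]
        have e4 : (∫ x in D \ Metric.closedBall x₀ r₂, g x) = (V - B) * f b ξ := by
          rw [setIntegral_congr_fun (g := fun _ => f b ξ)
            (hDo.measurableSet.diff measurableSet_closedBall)
            (fun x hx => by rw [hgdef]; simp only; rw [hd0' x hx, add_zero]), setIntegral_const,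
            measureReal_def, smul_eq_mul, houtvol]
        rw [e0, e1, e2, e4]
        linarith
      have h7 : V * f b ξ ≤ ∫ x in D, g x := by
        have := hCQ
        rw [inv_mul_eq_div, le_div_iff₀ hV0] at this
        linarith [this]
      have h8 : B * f b ξ ≤ A * f b (ξ + ζ) + (B - A) * M := by nlinarith [hf0 b ξ, h7, hIint]
      have h9 : f b ξ ≤ f b (ξ + ζ) + (N * δ) * M := by
        have h10 : B * f b ξ ≤ B * (f b (ξ + ζ) + (N * δ) * M) := by
          have i1 : A * f b (ξ + ζ) ≤ B * f b (ξ + ζ) :=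
            mul_le_mul_of_nonneg_right hAB (hf0 _ _)
          have i2 : (B - A) * M ≤ (N * δ * B) * M :=
            mul_le_mul_of_nonneg_right hBA hM0
          nlinarith
        exact le_of_mul_le_mul_left (by linarith) hB0
      have h11 : (N * δ : ℝ) * M = δ * Q + N * C * ‖ζ‖ := by
        rw [hQ, hM, hKdef]
        field_simp
        ring
      linarith
    · -- integrand not integrable: integral is zero and f b ξ ≤ 0
      rw [integral_undef hI, mul_zero] at hCQ
      have h12 : 0 ≤ f b (ξ + ζ) := hf0 _ _
      have h13 : 0 ≤ N * C * ‖ζ‖ := by positivity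
      have h14 : 0 ≤ δ * Q := by positivity
      linarith
  rw [sub_le_iff_le_add]
  have goal2 : f b ξ ≤ (N * C * ‖ζ‖ + f b (ξ + ζ)) := by
    refine le_of_forall_pos_le_add fun ε hε => ?_
    have hQ1 : 0 < Q + 1 := by linarith
    set δ := min (1/2 : ℝ) (ε / (Q + 1)) with hδdef
    have hδ0 : 0 < δ := lt_min (by norm_num) (by positivity)
    have hδ1 : δ < 1 := (min_le_left _ _).trans_lt (by norm_num)
    have h15 := key δ hδ0 hδ1
    have h16 : δ * Q ≤ ε := by
      have : δ ≤ ε / (Q + 1) := min_le_right _ _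
      calc δ * Q ≤ (ε / (Q + 1)) * Q := mul_le_mul_of_nonneg_right this hQ0
        _ ≤ ε := by rw [div_mul_eq_mul_div, div_le_iff₀ hQ1]; nlinarith
    linarith
  linarith [goal2]

lemma ev_ub {N n m : ℕ} (f : Vec m → Mat n N → ℝ) {p C : ℝ} (hC : 0 < C)
    (hub : ∀ b ξ, f b ξ ≤ C * (1 + ‖b‖ ^ p + ‖ξ‖)) (b : Vec m) (ξ : Mat n N) :
    ∀ᶠ t in atTop, f b (t • ξ) / t ≤ C * (1 + ‖b‖ ^ p + ‖ξ‖) := by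
  filter_upwards [eventually_ge_atTop 1] with t ht
  have ht0 : (0:ℝ) < t := lt_of_lt_of_le one_pos ht
  have hbp : (0:ℝ) ≤ ‖b‖ ^ p := Real.rpow_nonneg (norm_nonneg _) p
  rw [div_le_iff₀ ht0]
  have h1 := hub b (t • ξ)
  rw [norm_smul t ξ, Real.norm_eq_abs, abs_of_pos ht0] at h1
  have h2 : 1 + ‖b‖ ^ p + t * ‖ξ‖ ≤ (1 + ‖b‖ ^ p + ‖ξ‖) * t := by
    nlinarith [norm_nonneg ξ]
  calc f b (t • ξ) ≤ C * (1 + ‖b‖ ^ p + t * ‖ξ‖) := h1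
    _ ≤ C * ((1 + ‖b‖ ^ p + ‖ξ‖) * t) := mul_le_mul_of_nonneg_left h2 hC.le
    _ = C * (1 + ‖b‖ ^ p + ‖ξ‖) * t := by ring

lemma ev_nn {N n m : ℕ} (f : Vec m → Mat n N → ℝ) (hf0 : ∀ b ξ, 0 ≤ f b ξ)
    (b : Vec m) (ξ : Mat n N) : ∀ᶠ t in atTop, 0 ≤ f b (t • ξ) / t := by
  filter_upwards [eventually_gt_atTop 0] with t ht
  exact div_nonneg (hf0 _ _) ht.le

lemma rec_le_rec {N n m : ℕ} (hN : 0 < N) (f : Vec m → Mat n N → ℝ) {p C : ℝ}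
    (hp : 1 < p) (hC : 0 < C)
    (hub : ∀ b ξ, f b ξ ≤ C * (1 + ‖b‖ ^ p + ‖ξ‖)) (hf0 : ∀ b ξ, 0 ≤ f b ξ)
    (hH0 : IsConvexQuasiconvex f) (b b' : Vec m) (ξ : Mat n N) :
    limsup (fun t : ℝ => f b' (t • ξ) / t) atTop ≤ limsup (fun t : ℝ => f b (t • ξ) / t) atTop := by
  by_cases hbb' : b' = b
  · subst hbb'; exact le_refl _
  have hp0 : (0:ℝ) < p := by linarith
  have hq : (0:ℝ) < p⁻¹ := by positivity
  set db := ‖b' - b‖ with hdbdef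
  have hdb : 0 < db := by rw [hdbdef]; exact norm_pos_iff.2 (sub_ne_zero.2 hbb')
  have hbp : (0:ℝ) ≤ ‖b‖ ^ p := Real.rpow_nonneg (norm_nonneg _) p
  have h2p : (0:ℝ) < 2 ^ p := Real.rpow_pos_of_pos (by norm_num) p
  set ε : ℝ → ℝ := fun t =>
    db * C * ((1 + 2 ^ p * ‖b‖ ^ p) / (t ^ p⁻¹ * t) + (2 ^ p + ‖ξ‖) / t ^ p⁻¹) with hεdef
  have hεto : Tendsto ε atTop (𝓝 0) := by
    have k1 : Tendsto (fun t : ℝ => t ^ p⁻¹ * t) atTop atTop :=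
      (tendsto_rpow_atTop hq).atTop_mul_atTop₀ tendsto_id
    have k2 : Tendsto (fun t : ℝ => (1 + 2 ^ p * ‖b‖ ^ p) / (t ^ p⁻¹ * t)) atTop (𝓝 0) :=
      tendsto_const_nhds.div_atTop k1
    have k3 : Tendsto (fun t : ℝ => (2 ^ p + ‖ξ‖) / t ^ p⁻¹) atTop (𝓝 0) :=
      tendsto_const_nhds.div_atTop (tendsto_rpow_atTop hq)
    have k4 := (k2.add k3).const_mul (db * C)
    rw [add_zero, mul_zero] at k4
    exact k4
  have hevineq : ∀ᶠ t in atTop, f b' (t • ξ) / t ≤ f b (t • ξ) / t + ε t := by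
    filter_upwards [eventually_ge_atTop 1, eventually_ge_atTop (db ^ p)] with t ht1 htd
    have ht0 : (0:ℝ) < t := lt_of_lt_of_le one_pos ht1
    set R := t ^ p⁻¹ with hRdef
    have hR1 : 1 ≤ R := Real.one_le_rpow ht1 hq.le
    have hR0 : 0 < R := lt_of_lt_of_le one_pos hR1
    set lam := db / R with hlamdef
    have hlam0 : 0 < lam := div_pos hdb hR0
    have hlam1 : lam ≤ 1 := by
      rw [hlamdef, div_le_one hR0, hRdef]
      calc db = (db ^ p) ^ p⁻¹ := (Real.rpow_rpow_inv hdb.le hp0.ne').symm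
        _ ≤ t ^ p⁻¹ := Real.rpow_le_rpow (Real.rpow_nonneg hdb.le p) htd hq.le
    set c := b + lam⁻¹ • (b' - b) with hcdef
    have hb'eq : lam • c + (1 - lam) • b = b' := by
      rw [hcdef, smul_add, smul_smul, mul_inv_cancel₀ hlam0.ne', one_smul]
      module
    have hconv := cq_convex_b hN f hH0 c b hlam0.le hlam1 (t • ξ)
    rw [hb'eq] at hconv
    have hcnorm : ‖c‖ ≤ ‖b‖ + R := by
      rw [hcdef]
      refine (norm_add_le _ _).trans ?_
      rw [norm_smul lam⁻¹ (b' - b), Real.norm_eq_abs, abs_of_pos (inv_pos.2 hlam0), ← hdbdef]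
      have h3 : lam⁻¹ * db = R := by
        rw [hlamdef]; field_simp
      rw [h3]
    have hRp : R ^ p = t := Real.rpow_inv_rpow ht0.le hp0.ne'
    have hpow : ‖c‖ ^ p ≤ 2 ^ p * ‖b‖ ^ p + 2 ^ p * t := by
      have h4 : ‖c‖ ^ p ≤ (2 * max ‖b‖ R) ^ p := by
        refine Real.rpow_le_rpow (norm_nonneg _) (hcnorm.trans ?_) hp0.le
        have := le_max_left ‖b‖ R
        have := le_max_right ‖b‖ R
        linarith
      have h5 : (2 * max ‖b‖ R) ^ p = 2 ^ p * (max ‖b‖ R) ^ p :=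
        Real.mul_rpow (by norm_num) (le_max_of_le_left (norm_nonneg _))
      have h6 : (max ‖b‖ R) ^ p ≤ ‖b‖ ^ p + R ^ p := by
        rcases max_cases ‖b‖ R with ⟨heq, _⟩ | ⟨heq, _⟩ <;> rw [heq]
        · nlinarith [Real.rpow_nonneg (le_trans zero_le_one hR1 : (0:ℝ) ≤ R) p]
        · nlinarith [hbp]
      calc ‖c‖ ^ p ≤ 2 ^ p * (max ‖b‖ R) ^ p := by rw [← h5]; exact h4
        _ ≤ 2 ^ p * (‖b‖ ^ p + R ^ p) := mul_le_mul_of_nonneg_left h6 h2p.le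
        _ = 2 ^ p * ‖b‖ ^ p + 2 ^ p * t := by rw [hRp]; ring
    have hfc : f c (t • ξ) ≤ C * (1 + (2 ^ p * ‖b‖ ^ p + 2 ^ p * t) + t * ‖ξ‖) := by
      refine (hub c (t • ξ)).trans ?_
      have h7 : ‖t • ξ‖ = t * ‖ξ‖ := by
        rw [norm_smul t ξ, Real.norm_eq_abs, abs_of_pos ht0]
      rw [h7]
      exact mul_le_mul_of_nonneg_left (by linarith) hC.le
    have step1 : f b' (t • ξ) / t ≤ f b (t • ξ) / t + lam * f c (t • ξ) / t := by
      have h8 : f b' (t • ξ) ≤ f b (t • ξ) + lam * f c (t • ξ) := by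
        nlinarith [hf0 b (t • ξ), mul_nonneg hlam0.le (hf0 b (t • ξ))]
      calc f b' (t • ξ) / t ≤ (f b (t • ξ) + lam * f c (t • ξ)) / t := by gcongr
        _ = f b (t • ξ) / t + lam * f c (t • ξ) / t := add_div _ _ _
    have step2 : lam * f c (t • ξ) / t ≤ ε t := by
      have h9 : lam * f c (t • ξ) ≤ lam * (C * (1 + (2 ^ p * ‖b‖ ^ p + 2 ^ p * t) + t * ‖ξ‖)) :=
        mul_le_mul_of_nonneg_left hfc hlam0.le
      have h10 : lam * (C * (1 + (2 ^ p * ‖b‖ ^ p + 2 ^ p * t) + t * ‖ξ‖)) / t = ε t := by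
        rw [hεdef]; simp only
        rw [hlamdef, hRdef]
        field_simp
        ring
      rw [← h10]
      gcongr
    linarith
  refine le_of_forall_pos_le_add fun ε' hε' => ?_
  have hevsmall : ∀ᶠ t in atTop, ε t < ε' := hεto.eventually_lt_const hε'
  exact limsup_le_add' _ _ ε' (C * (1 + ‖b‖ ^ p + ‖ξ‖))
    ((hevineq.and hevsmall).mono fun t ht => ht.1.trans (by linarith [ht.2]))
    (ev_nn f hf0 b' ξ) (ev_nn f hf0 b ξ) (ev_ub f hC hub b ξ)

end AuxProofs

/-- Proposition `proprecession` 3. and 4.: if `f` is nonnegative,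
convex-quasiconvex and satisfies `(H1)_p` (`1 < p < ∞`), then `f^∞(·,ξ)` is constant
for every `ξ`, and `f^∞` is continuous. -/
theorem recessionFn_const_in_b_and_continuous
    {N n m : ℕ} (p : ℝ) (hp : 1 < p)
    (f : Vec m → Mat n N → ℝ) (hf0 : ∀ b ξ, 0 ≤ f b ξ)
    (hH0 : IsConvexQuasiconvex f) (hH1 : H1p p f) :
    (∀ (b b' : Vec m) (ξ : Mat n N), recessionFn f b ξ = recessionFn f b' ξ) ∧
    Continuous fun bξ : Vec m × Mat n N => recessionFn f bξ.1 bξ.2 := by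
  classical
  by_cases hN0 : N = 0
  · subst hN0
    have hrec0 : ∀ (b : Vec m) (ξ : Mat n 0), recessionFn f b ξ = 0 := by
      intro b ξ
      have heq : (fun t : ℝ => f b (t • ξ) / t) = fun t : ℝ => f b ξ / t := by
        funext t
        have ht : t • ξ = ξ := Subsingleton.elim _ _
        rw [ht]
      unfold recessionFn
      rw [heq]
      exact (tendsto_const_nhds.div_atTop tendsto_id).limsup_eq
    refine ⟨fun b b' ξ => by rw [hrec0, hrec0], ?_⟩
    have heq2 : (fun bξ : Vec m × Mat n 0 => recessionFn f bξ.1 bξ.2) = fun _ => (0:ℝ) :=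
      funext fun bξ => hrec0 _ _
    rw [heq2]
    exact continuous_const
  · have hN : 0 < N := Nat.pos_of_ne_zero hN0
    obtain ⟨C, hC, hH1'⟩ := hH1
    have hub : ∀ (b : Vec m) (ξ : Mat n N), f b ξ ≤ C * (1 + ‖b‖ ^ p + ‖ξ‖) :=
      fun b ξ => (hH1' b ξ).2
    have hconst : ∀ (b b' : Vec m) (ξ : Mat n N), recessionFn f b ξ = recessionFn f b' ξ := by
      intro b b' ξ
      exact le_antisymm (rec_le_rec hN f hp hC hub hf0 hH0 b' b ξ)
        (rec_le_rec hN f hp hC hub hf0 hH0 b b' ξ)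
    refine ⟨hconst, ?_⟩
    have hlipres : ∀ (ξ ξ' : Mat n N),
        recessionFn f 0 ξ ≤ recessionFn f 0 ξ' + (N * C) * ‖ξ - ξ'‖ := by
      intro ξ ξ'
      have hev : ∀ᶠ t in atTop, f 0 (t • ξ) / t ≤ f 0 (t • ξ') / t + (N * C) * ‖ξ - ξ'‖ := by
        filter_upwards [eventually_gt_atTop 0] with t ht
        have h1 := cq_lip hN f hC hub hf0 hH0 0 (t • ξ) (t • ξ' - t • ξ)
        rw [show t • ξ + (t • ξ' - t • ξ) = t • ξ' by abel] at h1
        have hnorm : ‖t • ξ' - t • ξ‖ = t * ‖ξ - ξ'‖ := by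
          rw [← smul_sub t ξ' ξ, norm_smul t (ξ' - ξ), Real.norm_eq_abs, abs_of_pos ht, norm_sub_rev]
        rw [hnorm] at h1
        have h3 : (N:ℝ) * C * (t * ‖ξ - ξ'‖) = (N * C * ‖ξ - ξ'‖) * t := by ring
        have h2 : f 0 (t • ξ) ≤ f 0 (t • ξ') + (N * C * ‖ξ - ξ'‖) * t := by
          linarith [h1, h3.le, h3.ge]
        calc f 0 (t • ξ) / t ≤ (f 0 (t • ξ') + (N * C * ‖ξ - ξ'‖) * t) / t := by gcongr
          _ = f 0 (t • ξ') / t + N * C * ‖ξ - ξ'‖ := by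
            rw [add_div, mul_div_cancel_right₀ _ ht.ne']
      exact limsup_le_add' _ _ _ (C * (1 + ‖(0:Vec m)‖ ^ p + ‖ξ'‖)) hev
        (ev_nn f hf0 0 ξ) (ev_nn f hf0 0 ξ') (ev_ub f hC hub 0 ξ')
    have heq3 : (fun bξ : Vec m × Mat n N => recessionFn f bξ.1 bξ.2)
        = fun bξ => recessionFn f 0 bξ.2 := funext fun bξ => hconst _ _ _
    rw [heq3]
    have hNC0 : (0:ℝ) ≤ N * C := by positivity
    have hlip : LipschitzWith (Real.toNNReal (N * C))
        (fun ξ : Mat n N => recessionFn f 0 ξ) := by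
      refine LipschitzWith.of_dist_le_mul fun ξ ξ' => ?_
      rw [Real.dist_eq, dist_eq_norm, Real.coe_toNNReal _ hNC0, abs_le]
      constructor
      · have h4 := hlipres ξ' ξ
        rw [norm_sub_rev] at h4
        linarith
      · linarith [hlipres ξ ξ']
    exact hlip.continuous.comp continuous_snd

end
end
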